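/- arXiv:2605.02002 — 5 statements merged into one kernel-verified Lean document; each statement's English description precedes it below -/
import Mathlib

section
/- Let Δ ≥ 3 and p₀ ∈ (0,1) with p₀(Δ−1) < 1, and let T^{(2)} be the total progeny of a Galton–Watson forest with two initial particles and offspring distribution Bin(Δ−1, p₀). Set ξ_* = log( (Δ−2)^{Δ−2} / ( p₀ (Δ−1)^{Δ−1} (1−p₀)^{Δ−2} ) ). Then for every integer x ≥ 2, P(T^{(2)} = x) ≤ (2/x)·((1−p₀)/(p₀(Δ−2)))²·e^{−ξ_* x}. -/
open MeasureTheory ProbabilityTheory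

/-- The total progeny of a Galton–Watson forest with two initial particles and offspring
variables `ξ 0, ξ 1, …`, realized as the first time `k` at which the random walk with
steps `ξ i − 1` reaches `−2`, i.e. `Σ_{i<k} ξ i = k − 2`. -/
noncomputable def totalProgenyTwo {Ω : Type*} (ξ : ℕ → Ω → ℕ) (ω : Ω) : ℕ :=
  sInf {k : ℕ | (∑ i ∈ Finset.range k, (ξ i ω : ℤ)) = (k : ℤ) - 2}

/-!
The event `T = x` forces the Łukasiewicz walk `Σ_{i<k} (ξ i - 1)` of the first `x` offspring
numbers to reach `-2` for the first time at step `x`. Among the `x` cyclic rotations of a word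
with steps `≥ -1` and total `-2`, at most two have this first-passage property (cycle lemma),
so `P(T = x) ≤ (2/x) P(ξ 0 + ⋯ + ξ (x-1) = x - 2)`, a binomial point probability. Chernoff
bounds it by `φ(u)^x / u^(x-2)` with `φ(u) = (p₀ u + 1 - p₀)^(Δ-1)`, and at the optimal
`u = (1 - p₀)/(p₀ (Δ - 2))` one has `φ(u) / u = e^(-ξ_*)`.
-/

open Finset Fintype Fin.NatCast

lemma sum_piFinset_comp_equiv {ι β M : Type*} [Fintype ι] [DecidableEq ι]
    [AddCommMonoid M] (s : Finset β) (e : ι ≃ ι) (g : (ι → β) → M) :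
    ∑ f ∈ piFinset fun _ => s, g (f ∘ e) = ∑ f ∈ piFinset fun _ => s, g f :=
  sum_nbij' (fun f => f ∘ e) (fun f => f ∘ e.symm) (by simp +contextual) (by simp +contextual)
    (fun f _ => by ext; simp) (fun f _ => by ext; simp) (fun _ _ => rfl)

section LukasiewiczWalk

variable {n : ℕ} [NeZero n]

/-- Indices are read modulo `n`, so the walk continues periodically after time `n`. -/
def lukasiewiczWalk (f : Fin n → ℕ) (k : ℕ) : ℤ := ∑ i ∈ range k, ((f (i : Fin n) : ℤ) - 1)

def FirstReachesNegTwo (f : Fin n → ℕ) : Prop :=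
  (∀ k < n, -1 ≤ lukasiewiczWalk f k) ∧ lukasiewiczWalk f n = -2

instance : DecidablePred (FirstReachesNegTwo (n := n)) := fun f => by
  unfold FirstReachesNegTwo; infer_instance

lemma lukasiewiczWalk_succ (f : Fin n → ℕ) (k : ℕ) :
    lukasiewiczWalk f (k + 1) = lukasiewiczWalk f k + f (k : Fin n) - 1 := by
  rw [lukasiewiczWalk, sum_range_succ, ← lukasiewiczWalk]; ring

lemma lukasiewiczWalk_add (f : Fin n → ℕ) (k m : ℕ) :
    lukasiewiczWalk f (k + m) =
      lukasiewiczWalk f k + ∑ i ∈ range m, ((f ((k + i : ℕ) : Fin n) : ℤ) - 1) :=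
  sum_range_add _ _ _

lemma lukasiewiczWalk_add_period (f : Fin n → ℕ) (k : ℕ) :
    lukasiewiczWalk f (k + n) = lukasiewiczWalk f k + lukasiewiczWalk f n := by
  rw [add_comm, lukasiewiczWalk_add, add_comm]
  simp [lukasiewiczWalk]

lemma lukasiewiczWalk_rotate (f : Fin n → ℕ) (c : Fin n) (k : ℕ) :
    lukasiewiczWalk (fun i => f (i + c)) k = lukasiewiczWalk f (c + k) - lukasiewiczWalk f c := by
  rw [lukasiewiczWalk_add, add_sub_cancel_left, lukasiewiczWalk]
  refine sum_congr rfl fun i _ => ?_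
  rw [Nat.cast_add, Fin.cast_val_eq_self, add_comm]

lemma lukasiewiczWalk_period (f : Fin n → ℕ) :
    lukasiewiczWalk f n = ∑ i, (f i : ℤ) - n := by
  rw [lukasiewiczWalk, ← Fin.sum_univ_eq_sum_range (fun i => ((f (i : Fin n) : ℤ) - 1))]
  simp [Fin.cast_val_eq_self, sum_sub_distrib]

lemma neg_one_le_lukasiewiczWalk_of_forall_ne (f : Fin n → ℕ) {k : ℕ}
    (h : ∀ j ≤ k, lukasiewiczWalk f j ≠ -2) : -1 ≤ lukasiewiczWalk f k := by
  induction k with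
  | zero => simp [lukasiewiczWalk]
  | succ k ih =>
    have := ih fun j hj => h j (by omega)
    have := h (k + 1) le_rfl
    rw [lukasiewiczWalk_succ] at this ⊢
    omega

lemma sum_add_two_eq_of_firstReachesNegTwo {f : Fin n → ℕ} (hf : FirstReachesNegTwo f) :
    ∑ i, f i + 2 = n := by
  have := hf.2
  rw [lukasiewiczWalk_period] at this
  exact_mod_cast (by omega : (∑ i, f i : ℤ) + 2 = n)

lemma add_two_le_of_firstReachesNegTwo {f : Fin n → ℕ} (hf : FirstReachesNegTwo f) (i : Fin n) :
    f i + 2 ≤ n :=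
  sum_add_two_eq_of_firstReachesNegTwo hf ▸ Nat.add_le_add_right
    (single_le_sum (fun j _ => Nat.zero_le (f j)) (mem_univ i)) 2

/-- The walks started at `a` and at `b` stay above `-2` up to `b` and up to `a + n` respectively,
while the walk loses `2` per period. -/
lemma lukasiewiczWalk_sub_eq_one {f : Fin n → ℕ} {a b : Fin n}
    (ha : FirstReachesNegTwo fun i => f (i + a)) (hb : FirstReachesNegTwo fun i => f (i + b))
    (hab : a < b) : lukasiewiczWalk f a - lukasiewiczWalk f b = 1 := by
  have hperiod : lukasiewiczWalk f n = -2 := by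
    have := ha.2
    rwa [lukasiewiczWalk_rotate, lukasiewiczWalk_add_period, add_sub_cancel_left] at this
  have hab' := ha.1 (b - a) (by omega)
  have hba := hb.1 (a + n - b) (by omega)
  rw [lukasiewiczWalk_rotate, show (a : ℕ) + (b - a) = b by omega] at hab'
  rw [lukasiewiczWalk_rotate, show (b : ℕ) + (a + n - b) = a + n by omega,
    lukasiewiczWalk_add_period] at hba
  omega

/-- The easy half of the cycle lemma. -/
lemma card_rotations_firstReachesNegTwo_le_two (f : Fin n → ℕ) :
    #{c | FirstReachesNegTwo fun i => f (i + c)} ≤ 2 := by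
  by_contra! h
  obtain ⟨a, ha, b, hb, c, hc, hab, hac, hbc⟩ := two_lt_card.mp h
  simp only [mem_filter, mem_univ, true_and] at ha hb hc
  have step : ∀ {a b : Fin n}, (FirstReachesNegTwo fun i => f (i + a)) →
      (FirstReachesNegTwo fun i => f (i + b)) → a ≠ b →
      lukasiewiczWalk f a - lukasiewiczWalk f b = 1 ∨
        lukasiewiczWalk f b - lukasiewiczWalk f a = 1 := fun ha hb hab =>
    hab.lt_or_gt.imp (lukasiewiczWalk_sub_eq_one ha hb) (lukasiewiczWalk_sub_eq_one hb ha)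
  have := step ha hb hab
  have := step ha hc hac
  have := step hb hc hbc
  omega

lemma sum_add_two_eq_of_firstReachesNegTwo_rotate {f : Fin n → ℕ} {c : Fin n}
    (hf : FirstReachesNegTwo fun i => f (i + c)) : ∑ i, f i + 2 = n := by
  rw [← Equiv.sum_comp (Equiv.addRight c) f]
  exact sum_add_two_eq_of_firstReachesNegTwo hf

/-- Double counting over the `n` rotations of each word, weighted by a rotation-invariant `w`. -/
lemma card_mul_sum_firstReachesNegTwo_le (s : Finset ℕ) (w : (Fin n → ℕ) → ℝ)
    (hw0 : ∀ f, 0 ≤ w f) (hw : ∀ f c, w (fun i => f (i + c)) = w f) :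
    n * ∑ f ∈ piFinset (fun _ => s) with FirstReachesNegTwo f, w f ≤
      2 * ∑ f ∈ piFinset (fun _ => s) with ∑ i, f i + 2 = n, w f := by
  set B := piFinset fun _ : Fin n => s
  have hrot (c : Fin n) : ∑ f ∈ B with FirstReachesNegTwo f, w f =
      ∑ f ∈ B with FirstReachesNegTwo (fun i => f (i + c)), w f := by
    rw [sum_filter, sum_filter, ← sum_piFinset_comp_equiv s (Equiv.addRight c)]
    exact sum_congr rfl fun f _ => by simp [Function.comp_def, hw]
  have hcount (f : Fin n → ℕ) : #{c | FirstReachesNegTwo fun i => f (i + c)} * w f ≤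
      if ∑ i, f i + 2 = n then 2 * w f else 0 := by
    split_ifs with hsum
    · exact mul_le_mul_of_nonneg_right
        (by exact_mod_cast card_rotations_firstReachesNegTwo_le_two f) (hw0 f)
    · rw [card_eq_zero.mpr (filter_eq_empty_iff.mpr fun c _ hc =>
        hsum (sum_add_two_eq_of_firstReachesNegTwo_rotate hc)), Nat.cast_zero, zero_mul]
  calc n * ∑ f ∈ B with FirstReachesNegTwo f, w f
      = ∑ c : Fin n, ∑ f ∈ B with FirstReachesNegTwo (fun i => f (i + c)), w f := by
        simp [← hrot]
    _ = ∑ f ∈ B, #{c | FirstReachesNegTwo fun i => f (i + c)} * w f := by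
        simp_rw [sum_filter (s := B)]
        rw [sum_comm]
        simp_rw [← sum_filter, sum_const, nsmul_eq_mul]
    _ ≤ ∑ f ∈ B, if ∑ i, f i + 2 = n then 2 * w f else 0 := sum_le_sum fun f _ => hcount f
    _ = 2 * ∑ f ∈ B with ∑ i, f i + 2 = n, w f := by rw [mul_sum, sum_filter]

end LukasiewiczWalk

lemma measureReal_mem_finset_le_sum_prod {Ω ι β : Type*} [MeasurableSpace Ω] [Fintype ι]
    [MeasurableSpace β] [MeasurableSingletonClass β] {P : Measure Ω} [IsFiniteMeasure P]
    {X : ι → Ω → β} (hX : iIndepFun X P) (S : Finset (ι → β)) :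
    P.real {ω | (fun i => X i ω) ∈ S} ≤ ∑ f ∈ S, ∏ i, P.real {ω | X i ω = f i} := by
  have hcylinder (f : ι → β) : P {ω | ∀ i, X i ω = f i} = ∏ i, P {ω | X i ω = f i} := by
    have := hX.measure_inter_preimage_eq_mul univ (sets := fun i => {f i})
      fun _ _ => measurableSet_singleton _
    simpa [Set.preimage, Set.iInter_ofPred] using this
  have hcover : {ω | (fun i => X i ω) ∈ S} = ⋃ f ∈ S, {ω | ∀ i, X i ω = f i} := by
    ext ω
    simp only [Set.mem_ofPred_eq, Set.mem_iUnion, exists_prop]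
    exact ⟨fun h => ⟨_, h, fun _ => rfl⟩, fun ⟨f, hf, hXf⟩ => funext hXf ▸ hf⟩
  calc P.real {ω | (fun i => X i ω) ∈ S}
      ≤ (∑ f ∈ S, P {ω | ∀ i, X i ω = f i}).toReal :=
        ENNReal.toReal_mono (ENNReal.sum_ne_top.2 fun _ _ => measure_ne_top _ _)
          (hcover ▸ measure_biUnion_finset_le _ _)
    _ = ∑ f ∈ S, ∏ i, P.real {ω | X i ω = f i} := by
        rw [ENNReal.toReal_sum fun _ _ => measure_ne_top _ _]
        simp_rw [hcylinder, ENNReal.toReal_prod, measureReal_def]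

lemma sum_prod_filter_sum_eq_le {ι : Type*} [Fintype ι] [DecidableEq ι] (s : Finset ℕ)
    {g : ℕ → ℝ} (hg : ∀ k, 0 ≤ g k) {u : ℝ} (hu : 0 < u) (m : ℕ) :
    ∑ f ∈ piFinset (fun _ : ι => s) with ∑ i, f i = m, ∏ i, g (f i) ≤
      (∑ k ∈ s, g k * u ^ k) ^ card ι / u ^ m := by
  rw [le_div_iff₀ (pow_pos hu m), sum_mul]
  calc ∑ f ∈ piFinset (fun _ : ι => s) with ∑ i, f i = m, (∏ i, g (f i)) * u ^ m
      = ∑ f ∈ piFinset (fun _ : ι => s) with ∑ i, f i = m, ∏ i, g (f i) * u ^ f i :=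
        sum_congr rfl fun f hf => by
          rw [prod_mul_distrib, prod_pow_eq_pow_sum, (mem_filter.1 hf).2]
    _ ≤ ∑ f ∈ piFinset (fun _ : ι => s), ∏ i, g (f i) * u ^ f i :=
        sum_le_sum_of_subset_of_nonneg (filter_subset _ _) fun f _ _ =>
          prod_nonneg fun i _ => mul_nonneg (hg _) (pow_nonneg hu.le _)
    _ = (∑ k ∈ s, g k * u ^ k) ^ card ι := by
        rw [← prod_univ_sum (fun _ => s) fun _ k => g k * u ^ k, prod_const, card_univ]

lemma sum_range_choose_mul_pow {n N : ℕ} (h : n < N) (p q u : ℝ) :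
    ∑ k ∈ range N, (n.choose k : ℝ) * p ^ k * q ^ (n - k) * u ^ k = (p * u + q) ^ n := by
  rw [add_pow, sum_subset (range_subset_range.2 h) fun k _ hk => by
    rw [Nat.choose_eq_zero_of_lt (by simpa using hk)]; simp]
  exact sum_congr rfl fun k _ => by rw [mul_pow]; ring

lemma firstReachesNegTwo_of_totalProgenyTwo_eq {Ω : Type*} {ξ : ℕ → Ω → ℕ} {ω : Ω} {n : ℕ}
    [NeZero n] (h : totalProgenyTwo ξ ω = n) : FirstReachesNegTwo fun i : Fin n => ξ i ω := by
  have hwalk (k : ℕ) (hk : k ≤ n) :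
      lukasiewiczWalk (fun i : Fin n => ξ i ω) k = ∑ i ∈ range k, (ξ i ω : ℤ) - k := by
    rw [lukasiewiczWalk, sum_sub_distrib, sum_const, card_range, nsmul_one]
    congr 1
    exact sum_congr rfl fun i hi => by
      rw [Fin.val_cast_of_lt (by simp at hi; omega)]
  have hne : {k : ℕ | ∑ i ∈ range k, (ξ i ω : ℤ) = k - 2}.Nonempty := by
    by_contra hempty
    rw [Set.not_nonempty_iff_eq_empty] at hempty
    rw [totalProgenyTwo, hempty, Nat.sInf_empty] at h
    exact NeZero.ne n h.symm
  refine ⟨fun k hk => neg_one_le_lukasiewiczWalk_of_forall_ne _ fun j hj hj2 => ?_, ?_⟩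
  · rw [hwalk j (by omega)] at hj2
    exact Nat.notMem_of_lt_sInf (h ▸ (by omega : j < n) : j < totalProgenyTwo ξ ω)
      (by simp only [Set.mem_ofPred_eq]; omega)
  · have := Nat.sInf_mem hne
    rw [← totalProgenyTwo, h, Set.mem_ofPred_eq] at this
    rw [hwalk n le_rfl, this]
    ring

lemma binomial_pgf_at_optimal_point {p δ : ℝ} (hp : p ≠ 0) (hδ : δ ≠ 0) (q : ℝ) (k : ℕ) :
    (p * (q / (p * δ)) + q) ^ (k + 1) = q / (p * δ) * (p * (δ + 1) ^ (k + 1) * q ^ k / δ ^ k) := by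
  rw [show p * (q / (p * δ)) + q = q * (δ + 1) / δ by field_simp; ring, div_pow, mul_pow]
  field_simp
  ring

/-- The Chernoff parameter `u = (1 - p₀) / (p₀ (Δ - 2))` minimises `φ(u) / u` for the
probability generating function `φ(u) = (p₀ u + 1 - p₀) ^ (Δ - 1)` of `Bin(Δ - 1, p₀)`. -/
lemma sum_binomial_mul_pow_optimal_eq {Δ N : ℕ} (hΔ : 3 ≤ Δ) (hN : Δ ≤ N) {p₀ : ℝ}
    (hp : p₀ ∈ Set.Ioo (0:ℝ) 1) {ξstar : ℝ}
    (hξstar : ξstar = Real.log (((Δ : ℝ) - 2) ^ (Δ - 2)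
      / (p₀ * ((Δ : ℝ) - 1) ^ (Δ - 1) * (1 - p₀) ^ (Δ - 2)))) :
    ∑ k ∈ range N, (Nat.choose (Δ - 1) k : ℝ) * p₀ ^ k * (1 - p₀) ^ (Δ - 1 - k) *
        ((1 - p₀) / (p₀ * ((Δ : ℝ) - 2))) ^ k =
      (1 - p₀) / (p₀ * ((Δ : ℝ) - 2)) * Real.exp (-ξstar) := by
  obtain ⟨hp₀, hp₁⟩ := hp
  have hδ : 0 < (Δ : ℝ) - 2 := by
    have : (3 : ℝ) ≤ Δ := by exact_mod_cast hΔ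
    linarith
  have hB : 0 < p₀ * ((Δ : ℝ) - 1) ^ (Δ - 1) * (1 - p₀) ^ (Δ - 2) / ((Δ : ℝ) - 2) ^ (Δ - 2) := by
    have : 0 < 1 - p₀ := by linarith
    have : 0 < (Δ : ℝ) - 1 := by linarith
    positivity
  rw [sum_range_choose_mul_pow (by omega), hξstar, ← Real.log_inv, inv_div, Real.exp_log hB,
    show Δ - 1 = Δ - 2 + 1 by omega, show (Δ : ℝ) - 1 = (Δ - 2) + 1 by ring]
  exact binomial_pgf_at_optimal_point hp₀.ne' hδ.ne' _ _

theorem totalProgeny_point_tail_general {Ω : Type*} [MeasurableSpace Ω] (P : Measure Ω)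
    [IsProbabilityMeasure P]
    (Δ : ℕ) (hΔ : 3 ≤ Δ) (p₀ : ℝ) (hp : p₀ ∈ Set.Ioo (0:ℝ) 1)
    (ξ : ℕ → Ω → ℕ)
    (hindep : iIndepFun ξ P)
    (hbin : ∀ i k, (P {ω | ξ i ω = k}).toReal
      = (Nat.choose (Δ - 1) k : ℝ) * p₀ ^ k * (1 - p₀) ^ (Δ - 1 - k))
    (ξstar : ℝ)
    (hξstar : ξstar = Real.log (((Δ : ℝ) - 2) ^ (Δ - 2)
      / (p₀ * ((Δ : ℝ) - 1) ^ (Δ - 1) * (1 - p₀) ^ (Δ - 2))))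
    (x : ℕ) (hx : 2 ≤ x) :
    (P {ω | totalProgenyTwo ξ ω = x}).toReal
      ≤ (2 / x) * ((1 - p₀) / (p₀ * ((Δ : ℝ) - 2))) ^ 2 * Real.exp (-ξstar * x) := by
  obtain ⟨m, rfl⟩ : ∃ m, x = m + 2 := ⟨x - 2, by omega⟩
  set pmf : ℕ → ℝ := fun k => (Nat.choose (Δ - 1) k : ℝ) * p₀ ^ k * (1 - p₀) ^ (Δ - 1 - k)
  have hpmf (k : ℕ) : 0 ≤ pmf k := by
    have : 0 ≤ 1 - p₀ := by linarith [hp.2]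
    have := hp.1
    positivity
  set u := (1 - p₀) / (p₀ * ((Δ : ℝ) - 2))
  have hu : 0 < u := by
    have : (3 : ℝ) ≤ Δ := by exact_mod_cast hΔ
    exact div_pos (by linarith [hp.2]) (mul_pos hp.1 (by linarith))
  -- holds every first-passage word (entries `≤ m`) and the whole support of `Bin(Δ - 1, p₀)`
  set box := piFinset fun _ : Fin (m + 2) => range (m + Δ)
  calc (P {ω | totalProgenyTwo ξ ω = m + 2}).toReal
      ≤ P.real {ω | (fun i : Fin (m + 2) => ξ i ω) ∈ box.filter FirstReachesNegTwo} := by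
        refine measureReal_mono fun ω hω => ?_
        have hfirst := firstReachesNegTwo_of_totalProgenyTwo_eq hω
        refine mem_filter.2 ⟨mem_piFinset.2 fun i => mem_range.2 ?_, hfirst⟩
        have := add_two_le_of_firstReachesNegTwo hfirst i
        omega
    _ ≤ ∑ f ∈ box with FirstReachesNegTwo f, ∏ i, pmf (f i) := by
        simpa only [measureReal_def, hbin] using measureReal_mem_finset_le_sum_prod
          (hindep.precomp (g := ((↑) : Fin (m + 2) → ℕ)) Fin.val_injective) _
    _ ≤ 2 / (m + 2 : ℕ) * ∑ f ∈ box with ∑ i, f i = m, ∏ i, pmf (f i) := by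
        rw [div_mul_eq_mul_div, le_div_iff₀ (by positivity), mul_comm]
        simpa only [add_left_inj] using card_mul_sum_firstReachesNegTwo_le (n := m + 2)
          (range (m + Δ)) (fun f => ∏ i, pmf (f i)) (fun f => prod_nonneg fun i _ => hpmf _)
          fun f c => Equiv.prod_comp (Equiv.addRight c) fun i => pmf (f i)
    _ ≤ 2 / (m + 2 : ℕ) * ((u * Real.exp (-ξstar)) ^ (m + 2) / u ^ m) := by
        have hpgf : ∑ k ∈ range (m + Δ), pmf k * u ^ k = u * Real.exp (-ξstar) :=
          sum_binomial_mul_pow_optimal_eq hΔ (by omega) hp hξstar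
        gcongr
        simpa [hpgf] using sum_prod_filter_sum_eq_le (ι := Fin (m + 2)) (range (m + Δ)) hpmf hu m
    _ = _ := by
        rw [mul_comm (-ξstar), Real.exp_nat_mul, mul_pow, pow_add u, mul_assoc (u ^ m),
          mul_div_cancel_left₀ _ (pow_ne_zero m hu.ne'), mul_assoc]

/-- **Chernoff bound on the total-progeny point probabilities.**
With `ξ_* = log((Δ−2)^{Δ−2}/(p₀(Δ−1)^{Δ−1}(1−p₀)^{Δ−2}))`, for every `x ≥ 2`,
`P(T^{(2)} = x) ≤ (2/x)·((1−p₀)/(p₀(Δ−2)))²·e^{−ξ_* x}`. -/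
theorem totalProgeny_point_tail {Ω : Type*} [MeasurableSpace Ω] (P : Measure Ω)
    [IsProbabilityMeasure P]
    (Δ : ℕ) (hΔ : 3 ≤ Δ) (p₀ : ℝ) (hp : p₀ ∈ Set.Ioo (0:ℝ) 1)
    (hsub : p₀ * ((Δ : ℝ) - 1) < 1)
    (ξ : ℕ → Ω → ℕ) (hmeas : ∀ i, Measurable (ξ i))
    (hindep : iIndepFun ξ P)
    (hbin : ∀ i k, (P {ω | ξ i ω = k}).toReal
      = (Nat.choose (Δ - 1) k : ℝ) * p₀ ^ k * (1 - p₀) ^ (Δ - 1 - k))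
    (ξstar : ℝ)
    (hξstar : ξstar = Real.log (((Δ : ℝ) - 2) ^ (Δ - 2)
      / (p₀ * ((Δ : ℝ) - 1) ^ (Δ - 1) * (1 - p₀) ^ (Δ - 2))))
    (x : ℕ) (hx : 2 ≤ x) :
    (P {ω | totalProgenyTwo ξ ω = x}).toReal
      ≤ (2 / x) * ((1 - p₀) / (p₀ * ((Δ : ℝ) - 2))) ^ 2 * Real.exp (-ξstar * x) :=
  totalProgeny_point_tail_general P Δ hΔ p₀ hp ξ hindep hbin ξstar hξstar x hx
end

section
/- Under the assumptions of the previous statement, with α_* = ξ_*/2, the total progeny satisfies the exponential moment bound E[exp(α_* T^{(2)})] ≤ (2/((1−e^{−2α_*})(1−e^{−α_*})))·((1−p₀)/(p₀(Δ−2)))². -/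
open MeasureTheory ProbabilityTheory

/-!
The walk `S_x = ∑_{i<x} ξ i` stands at `x - 2` at time `x = T`, so `{T = x}` lies in the upper
tail event `{S_x ≥ x - 2}`; if the walk never gets there, `T = 0` and the same holds trivially.
The steps are i.i.d. `Bin(Δ - 1, p₀)`, and the Chernoff bound at the optimal tilt `log r`,
`r = (1 - p₀)/(p₀(Δ - 2))`, gives `P(S_x ≥ x - 2) ≤ r² e^{-ξ_* x}`. With `a = p₀(Δ - 1) < 1`,
`e^{-ξ_*} = a (1 + (1 - a)/(Δ - 2))^{Δ - 2} ≤ a e^{1-a} < 1`. Summing against `e^{α_* x}` with `α_* = ξ_*/2` leaves a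
geometric series of ratio `e^{-α_*}`.
-/

open Real Finset
open scoped unitInterval ENNReal

/-- For `Δ = n + 2` this is `e^{-ξ_*}`, the exponential rate of `P(S_x ≥ x - 2)`. -/
noncomputable def tailRate (n : ℕ) (p : ℝ) : ℝ :=
  p * (n + 1) * (1 + (1 - p * (n + 1)) / n) ^ n

lemma mul_one_add_div_pow_lt_one {a : ℝ} (ha₀ : 0 ≤ a) (ha₁ : a < 1) (n : ℕ) :
    a * (1 + (1 - a) / n) ^ n < 1 := by
  have hpow : (1 + (1 - a) / n) ^ n ≤ exp (1 - a) := by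
    rcases n.eq_zero_or_pos with rfl | hn
    · simp only [pow_zero, one_le_exp_iff]
      linarith
    · calc (1 + (1 - a) / n) ^ n ≤ exp ((1 - a) / n) ^ n := by
            gcongr
            linarith [add_one_le_exp ((1 - a) / n)]
        _ = exp (1 - a) := by rw [← exp_nat_mul, mul_div_cancel₀ _ (by positivity)]
  have hexp : a * exp (1 - a) < 1 := by
    have := add_one_lt_exp (x := a - 1) (by linarith)
    rw [show 1 - a = -(a - 1) by ring, exp_neg, ← div_eq_mul_inv, div_lt_one (exp_pos _)]
    linarith
  calc a * (1 + (1 - a) / n) ^ n ≤ a * exp (1 - a) := by gcongr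
    _ < 1 := hexp

lemma tailRate_lt_one {n : ℕ} {p : ℝ} (hp : 0 ≤ p) (hpn : p * (n + 1) < 1) :
    tailRate n p < 1 :=
  mul_one_add_div_pow_lt_one (by positivity) hpn n

lemma exp_neg_log_eq_tailRate {n : ℕ} (hn : n ≠ 0) {p : ℝ} (hp₀ : 0 < p) (hp₁ : p < 1) :
    exp (-log (n ^ n / (p * (n + 1) ^ (n + 1) * (1 - p) ^ n))) = tailRate n p := by
  have hn' : (n : ℝ) ≠ 0 := Nat.cast_ne_zero.mpr hn
  have hbase : 1 + (1 - p * (n + 1)) / n = (1 - p) * (n + 1) / n := by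
    field_simp
    ring
  rw [tailRate, exp_neg, exp_log (by positivity), hbase, div_pow, mul_pow]
  field_simp
  ring

lemma tsum_ofReal_exp_mul_le_of_le_geometric {α β C : ℝ} (hαβ : α < β) (hC : 0 ≤ C)
    {μ : ℕ → ℝ≥0∞} (hμ : ∀ x : ℕ, μ x ≤ ENNReal.ofReal (C * exp (-β) ^ x)) :
    ∑' x : ℕ, ENNReal.ofReal (exp (α * x)) * μ x ≤ ENNReal.ofReal (C / (1 - exp (α - β))) := by
  have hρ₀ : 0 ≤ exp (α - β) := (exp_pos _).le
  have hρ₁ : exp (α - β) < 1 := exp_lt_one_iff.mpr (by linarith)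
  have hterm : ∀ x : ℕ, exp (α * x) * (C * exp (-β) ^ x) = C * exp (α - β) ^ x := by
    intro x
    rw [mul_comm α, exp_nat_mul, sub_eq_add_neg, exp_add, mul_pow]
    ring
  calc ∑' x : ℕ, ENNReal.ofReal (exp (α * x)) * μ x
      ≤ ∑' x : ℕ, ENNReal.ofReal (C * exp (α - β) ^ x) := by
        refine ENNReal.tsum_le_tsum fun x => ?_
        rw [← hterm, ENNReal.ofReal_mul (exp_pos _).le]
        gcongr
        exact hμ x
    _ = ENNReal.ofReal (C / (1 - exp (α - β))) := by
        rw [← ENNReal.ofReal_tsum_of_nonneg (fun x => by positivity)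
          ((summable_geometric_of_lt_one hρ₀ hρ₁).mul_left C), tsum_mul_left,
          tsum_geometric_of_lt_one hρ₀ hρ₁, div_eq_mul_inv]

lemma div_one_sub_exp_neg_le {α C : ℝ} (hα : 0 < α) (hC : 0 ≤ C) :
    C / (1 - exp (-α)) ≤ 2 / ((1 - exp (-(2 * α))) * (1 - exp (-α))) * C := by
  have hv : 0 < 1 - exp (-(2 * α)) := by rw [sub_pos, exp_lt_one_iff]; linarith
  calc C / (1 - exp (-α))
      = (1 - exp (-(2 * α))) * C / ((1 - exp (-(2 * α))) * (1 - exp (-α))) :=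
        (mul_div_mul_left _ _ hv.ne').symm
    _ ≤ 2 * C / ((1 - exp (-(2 * α))) * (1 - exp (-α))) := by
        have hu : 0 < 1 - exp (-α) := by rw [sub_pos, exp_lt_one_iff]; linarith
        gcongr
        linarith [exp_pos (-(2 * α))]
    _ = 2 / ((1 - exp (-(2 * α))) * (1 - exp (-α))) * C := by ring

/-- If the walk never reaches `-2`, then `totalProgenyTwo ξ ω = sInf ∅ = 0` and the bound is
trivial. -/
lemma sub_two_le_sum_range_totalProgenyTwo {Ω : Type*} (ξ : ℕ → Ω → ℕ) (ω : Ω) :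
    (totalProgenyTwo ξ ω : ℝ) - 2 ≤ ∑ i ∈ range (totalProgenyTwo ξ ω), (ξ i ω : ℝ) := by
  suffices h : (totalProgenyTwo ξ ω : ℤ) - 2 ≤ ∑ i ∈ range (totalProgenyTwo ξ ω), (ξ i ω : ℤ) by
    exact_mod_cast h
  rcases Set.eq_empty_or_nonempty
    {k : ℕ | (∑ i ∈ range k, (ξ i ω : ℤ)) = (k : ℤ) - 2} with h | h
  · simp [totalProgenyTwo, h]
  · exact (Nat.sInf_mem h).ge

section Probability

variable {Ω : Type*} [MeasurableSpace Ω] {P : Measure Ω}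

lemma lintegral_comp_le_tsum_mul_measure {ι : Type*} [Countable ι] {T : Ω → ι}
    {A : ι → Set Ω} (hA : ∀ x, MeasurableSet (A x)) (hT : ∀ ω, ω ∈ A (T ω)) (f : ι → ℝ≥0∞) :
    ∫⁻ ω, f (T ω) ∂P ≤ ∑' x, f x * P (A x) := by
  calc ∫⁻ ω, f (T ω) ∂P ≤ ∫⁻ ω, ∑' x, (A x).indicator (fun _ => f x) ω ∂P := by
        refine lintegral_mono fun ω => ?_
        calc f (T ω) = (A (T ω)).indicator (fun _ => f (T ω)) ω :=
              (Set.indicator_of_mem (hT ω) fun _ => f (T ω)).symm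
          _ ≤ _ := ENNReal.le_tsum (T ω)
    _ = ∑' x, f x * P (A x) := by
        rw [lintegral_tsum fun x => (measurable_const.indicator (hA x)).aemeasurable]
        simp only [lintegral_indicator_const (hA _)]

variable {n : ℕ} {p : I}

lemma hasLaw_binomial_of_measureReal [IsFiniteMeasure P] {X : Ω → ℕ} (hX : Measurable X)
    (h : ∀ k, P.real {ω | X ω = k} = n.choose k * p ^ k * (1 - p) ^ (n - k)) :
    HasLaw X Bin(n, p) P where
  aemeasurable := hX.aemeasurable
  map_eq := Measure.ext_of_measureReal_singleton fun k => by
    rw [map_measureReal_apply hX (measurableSet_singleton k), binomial_real_singleton]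
    exact h k

lemma mgf_of_hasLaw_binomial {X : Ω → ℕ} (hX : HasLaw X Bin(n, p) P) (t : ℝ) :
    mgf (fun ω => (X ω : ℝ)) P t = (1 - p + p * exp t) ^ n := by
  calc mgf (fun ω => (X ω : ℝ)) P t = ∫ k, exp (t * k) ∂Bin(n, p) :=
        hX.integral_comp (f := fun k : ℕ => exp (t * k)) .of_discrete
    _ = ∑ k ∈ range (n + 1), (p * exp t) ^ k * (1 - p) ^ (n - k) * n.choose k := by
        rw [integral_binomial, Nat.range_succ_eq_Iic]
        refine sum_congr rfl fun k _ => ?_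
        rw [smul_eq_mul, mul_comm t, exp_nat_mul]
        ring
    _ = (1 - p + p * exp t) ^ n := by rw [← add_pow, add_comm]

lemma integrable_exp_mul_of_hasLaw_binomial {X : Ω → ℕ} (hX : HasLaw X Bin(n, p) P) (t : ℝ) :
    Integrable (fun ω => exp (t * X ω)) P := by
  have h := integrable_binomial (n := n) (p := p) fun k : ℕ => exp (t * k)
  rw [← hX.map_eq] at h
  exact h.comp_aemeasurable hX.aemeasurable

lemma measureReal_sum_ge_le_of_hasLaw_binomial {ι : Type*} {X : ι → Ω → ℕ}
    (hmeas : ∀ i, Measurable (X i)) (hindep : iIndepFun X P)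
    (hlaw : ∀ i, HasLaw (X i) Bin(n, p) P) {t : ℝ} (ht : 0 ≤ t) (s : Finset ι) (ε : ℝ) :
    P.real {ω | ε ≤ ∑ i ∈ s, (X i ω : ℝ)} ≤ exp (-t * ε) * (1 - p + p * exp t) ^ (n * #s) := by
  have := hindep.isProbabilityMeasure
  set Y : ι → Ω → ℝ := fun i ω => X i ω
  have hYmeas : ∀ i, Measurable (Y i) := fun i => measurable_from_nat.comp (hmeas i)
  have hYindep : iIndepFun Y P := hindep.comp _ fun _ => measurable_from_nat
  have h := measure_ge_le_exp_mul_mgf (μ := P) (X := ∑ i ∈ s, Y i) ε ht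
    (hYindep.integrable_exp_mul_sum hYmeas fun i _ =>
      integrable_exp_mul_of_hasLaw_binomial (hlaw i) t)
  rw [hYindep.mgf_sum hYmeas, prod_congr rfl fun i _ => mgf_of_hasLaw_binomial (hlaw i) t,
    prod_const, ← pow_mul] at h
  simpa only [Finset.sum_apply] using h

lemma measureReal_sum_range_ge_sub_two_le {X : ℕ → Ω → ℕ} (hmeas : ∀ i, Measurable (X i))
    (hindep : iIndepFun X P) (hlaw : ∀ i, HasLaw (X i) Bin(n + 1, p) P) (hn : 0 < n)
    (hp : 0 < (p : ℝ)) (hpn : (p : ℝ) * (n + 1) ≤ 1) (x : ℕ) :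
    P.real {ω | (x : ℝ) - 2 ≤ ∑ i ∈ range x, (X i ω : ℝ)}
      ≤ ((1 - p) / (p * n) : ℝ) ^ 2 * tailRate n p ^ x := by
  set r : ℝ := (1 - p) / (p * n)
  have hr : 1 ≤ r := by
    rw [le_div_iff₀ (by positivity)]
    linarith
  have hr₀ : 0 < r := by linarith
  have hshift : exp (-log r * (x - 2)) = r ^ 2 * r⁻¹ ^ x := by
    rw [show -log r * (x - 2) = ((2 : ℕ) : ℝ) * log r + x * log r⁻¹ by
        rw [log_inv]; push_cast; ring,
      exp_add, exp_nat_mul, exp_nat_mul, exp_log hr₀, exp_log (inv_pos.mpr hr₀)]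
  have htilt : r⁻¹ * (1 - p + p * r) ^ (n + 1) = tailRate n p := by
    have hn' : (0 : ℝ) < n := by exact_mod_cast hn
    have hbase : (1 - p + p * r : ℝ) = 1 + (1 - p * (n + 1)) / n := by
      simp only [r]; field_simp; ring
    have hp₁ : (1 - p : ℝ) ≠ 0 := by nlinarith
    have hstep : r⁻¹ * (1 - p + p * r) = p * (n + 1) := by
      simp only [r]; field_simp
    calc r⁻¹ * (1 - p + p * r) ^ (n + 1) = r⁻¹ * (1 - p + p * r) * (1 - p + p * r) ^ n := by
          ring
      _ = tailRate n p := by rw [hstep, hbase, tailRate]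
  calc _ ≤ exp (-log r * (x - 2)) * (1 - p + p * exp (log r)) ^ ((n + 1) * #(range x)) :=
        measureReal_sum_ge_le_of_hasLaw_binomial hmeas hindep hlaw (log_nonneg hr) _ _
    _ = r ^ 2 * (r⁻¹ * (1 - p + p * r) ^ (n + 1)) ^ x := by
        rw [hshift, exp_log hr₀, card_range, pow_mul, mul_pow]
        ring
    _ = _ := by rw [htilt]

end Probability

theorem totalProgeny_exp_moment_general {Ω : Type*} [MeasurableSpace Ω] (P : Measure Ω)
    (Δ : ℕ) (hΔ : 3 ≤ Δ) (p₀ : ℝ) (hp : p₀ ∈ Set.Ioo (0:ℝ) 1)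
    (hsub : p₀ * ((Δ : ℝ) - 1) < 1)
    (ξ : ℕ → Ω → ℕ) (hmeas : ∀ i, Measurable (ξ i))
    (hindep : iIndepFun ξ P)
    (hbin : ∀ i k, (P {ω | ξ i ω = k}).toReal
      = (Nat.choose (Δ - 1) k : ℝ) * p₀ ^ k * (1 - p₀) ^ (Δ - 1 - k))
    (ξstar αstar : ℝ)
    (hξstar : ξstar = Real.log (((Δ : ℝ) - 2) ^ (Δ - 2)
      / (p₀ * ((Δ : ℝ) - 1) ^ (Δ - 1) * (1 - p₀) ^ (Δ - 2))))
    (hαstar : αstar = ξstar / 2) :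
    ∫⁻ ω, ENNReal.ofReal (Real.exp (αstar * totalProgenyTwo ξ ω)) ∂P
      ≤ ENNReal.ofReal
          ((2 / ((1 - Real.exp (-(2 * αstar))) * (1 - Real.exp (-αstar))))
            * ((1 - p₀) / (p₀ * ((Δ : ℝ) - 2))) ^ 2) := by
  have := hindep.isProbabilityMeasure
  obtain ⟨n, rfl⟩ : ∃ n, Δ = n + 2 := ⟨Δ - 2, by omega⟩
  obtain ⟨hp₀, hp₁⟩ := hp
  simp only [show n + 2 - 1 = n + 1 by omega, Nat.add_sub_cancel, Nat.cast_add, Nat.cast_ofNat,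
    add_sub_cancel_right, show (n : ℝ) + 2 - 1 = n + 1 by ring] at hbin hsub hξstar ⊢
  let p : I := ⟨p₀, hp₀.le, hp₁.le⟩
  have hlaw : ∀ i, HasLaw (ξ i) Bin(n + 1, p) P :=
    fun i => hasLaw_binomial_of_measureReal (hmeas i) (hbin i)
  have hq : exp (-ξstar) = tailRate n p₀ :=
    hξstar ▸ exp_neg_log_eq_tailRate (by omega) hp₀ hp₁
  have hξ : 0 < ξstar := by
    have := tailRate_lt_one hp₀.le hsub
    rwa [← hq, exp_lt_one_iff, neg_lt_zero] at this
  have htail (x : ℕ) : P {ω | (x : ℝ) - 2 ≤ ∑ i ∈ range x, (ξ i ω : ℝ)}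
      ≤ ENNReal.ofReal (((1 - p₀) / (p₀ * n)) ^ 2 * exp (-ξstar) ^ x) := by
    rw [← ofReal_measureReal, hq]
    exact ENNReal.ofReal_le_ofReal
      (measureReal_sum_range_ge_sub_two_le hmeas hindep hlaw (by omega) hp₀ hsub.le x)
  calc ∫⁻ ω, ENNReal.ofReal (exp (αstar * totalProgenyTwo ξ ω)) ∂P
      ≤ ∑' x : ℕ, ENNReal.ofReal (exp (αstar * x))
          * P {ω | (x : ℝ) - 2 ≤ ∑ i ∈ range x, (ξ i ω : ℝ)} :=
        lintegral_comp_le_tsum_mul_measure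
          (A := fun x : ℕ => {ω | (x : ℝ) - 2 ≤ ∑ i ∈ range x, (ξ i ω : ℝ)})
          (fun x => measurableSet_le measurable_const (by fun_prop))
          (sub_two_le_sum_range_totalProgenyTwo ξ) _
    _ ≤ ENNReal.ofReal (((1 - p₀) / (p₀ * n)) ^ 2 / (1 - exp (-αstar))) := by
        rw [show -αstar = αstar - ξstar by linarith]
        exact tsum_ofReal_exp_mul_le_of_le_geometric (by linarith) (by positivity) htail
    _ ≤ _ := ENNReal.ofReal_le_ofReal (div_one_sub_exp_neg_le (by linarith) (by positivity))

/-- **Exponential moment of the total progeny.**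
With `ξ_* = log((Δ−2)^{Δ−2}/(p₀(Δ−1)^{Δ−1}(1−p₀)^{Δ−2}))` and `α_* = ξ_*/2`,
`E[exp(α_* T^{(2)})] ≤ (2/((1−e^{−2α_*})(1−e^{−α_*})))·((1−p₀)/(p₀(Δ−2)))²`. -/
theorem totalProgeny_exp_moment {Ω : Type*} [MeasurableSpace Ω] (P : Measure Ω)
    [IsProbabilityMeasure P]
    (Δ : ℕ) (hΔ : 3 ≤ Δ) (p₀ : ℝ) (hp : p₀ ∈ Set.Ioo (0:ℝ) 1)
    (hsub : p₀ * ((Δ : ℝ) - 1) < 1)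
    (ξ : ℕ → Ω → ℕ) (hmeas : ∀ i, Measurable (ξ i))
    (hindep : iIndepFun ξ P)
    (hbin : ∀ i k, (P {ω | ξ i ω = k}).toReal
      = (Nat.choose (Δ - 1) k : ℝ) * p₀ ^ k * (1 - p₀) ^ (Δ - 1 - k))
    (ξstar αstar : ℝ)
    (hξstar : ξstar = Real.log (((Δ : ℝ) - 2) ^ (Δ - 2)
      / (p₀ * ((Δ : ℝ) - 1) ^ (Δ - 1) * (1 - p₀) ^ (Δ - 2))))
    (hαstar : αstar = ξstar / 2) :
    ∫⁻ ω, ENNReal.ofReal (Real.exp (αstar * totalProgenyTwo ξ ω)) ∂P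
      ≤ ENNReal.ofReal
          ((2 / ((1 - Real.exp (-(2 * αstar))) * (1 - Real.exp (-αstar))))
            * ((1 - p₀) / (p₀ * ((Δ : ℝ) - 2))) ^ 2) :=
  totalProgeny_exp_moment_general P Δ hΔ p₀ hp hsub ξ hmeas hindep hbin ξstar αstar hξstar hαstar
end

section
/- Let G=(V,E) have maximal degree Δ and consider Bernoulli(p₀) site percolation on V with p₀(Δ−1) < 1. For an edge (u,v)∈E with both endpoints forced open, let C(u,v) be the open cluster containing {u,v}. Then for every m ≥ 2, P(|C(u,v)| ≥ m) ≤ (2/(1−e^{−ξ_*}))·((1−p₀)/(p₀(Δ−2)))²·e^{−ξ_* m}, where ξ_* = log((Δ−2)^{Δ−2}/(p₀(Δ−1)^{Δ−1}(1−p₀)^{Δ−2})). -/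
/-!
Explore the open cluster of `{u, v}` one vertex at a time, always querying an unexamined
neighbour of the open vertices found so far. Each query reveals a fresh Bernoulli(`p₀`)
variable, and each open vertex found brings at most `Δ - 1` new candidates, so a cluster of size
`m` is discovered within `(Δ - 1)(m - 1)` queries, `m - 2` of which are open. Hence
`P(|C(u,v)| ≥ m)` is at most the binomial tail `P(Bin((Δ - 1)(m - 1), p₀) ≥ m - 2)`, and the
Chernoff bound with parameter `y = (1 - p₀) / (p₀ (Δ - 2))` equals `y e^{-ξ_* (m - 1)}`, since
`(1 - p₀ + p₀ y)^(Δ - 1) = y e^{-ξ_*}`.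
-/

open MeasureTheory ProbabilityTheory

/-- The open cluster of the vertex `u` in site percolation: all vertices reachable from
`u` through edges of `G` both of whose endpoints are open in `η`. -/
def openCluster {V : Type*} (G : SimpleGraph V) (η : V → Bool) (u : V) : Set V :=
  {w | (SimpleGraph.fromRel
    (fun a b => G.Adj a b ∧ η a = true ∧ η b = true)).Reachable u w}

open Finset Function

namespace SitePercolation

section Bernoulli

variable {V : Type*} [Fintype V] [DecidableEq V]

def bernoulliWeight (p : ℝ) (g : V → Bool) : ℝ := ∏ w, if g w then p else 1 - p

def bernoulliProb (p : ℝ) (E : (V → Bool) → Bool) : ℝ := ∑ g with E g, bernoulliWeight p g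

theorem sum_bernoulliWeight (p : ℝ) : ∑ g : V → Bool, bernoulliWeight p g = 1 := by
  simp [bernoulliWeight, ← Fintype.prod_sum (fun (_ : V) (b : Bool) => if b then p else 1 - p)]

theorem bernoulliWeight_eq_mul_prod_erase (p : ℝ) (x : V) (g : V → Bool) :
    bernoulliWeight p g
      = (if g x then p else 1 - p) * ∏ w ∈ univ.erase x, if g w then p else 1 - p :=
  (mul_prod_erase _ _ (mem_univ x)).symm

theorem sum_filter_apply_eq_of_update {x : V} {H : (V → Bool) → ℝ}
    (hH : ∀ g b, H (update g x b) = H g) (b c : Bool) :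
    ∑ g with g x = b, H g = ∑ g with g x = c, H g :=
  sum_nbij' (update · x c) (update · x b) (by simp) (by simp)
    (fun g hg => by simp_all) (fun g hg => by simp_all) (by simp [hH])

theorem sum_bernoulliWeight_mul_ite (p : ℝ) (x : V) {A B : (V → Bool) → ℝ}
    (hA : ∀ g b, A (update g x b) = A g) (hB : ∀ g b, B (update g x b) = B g) :
    ∑ g, bernoulliWeight p g * (if g x then A g else B g)
      = p * ∑ g, bernoulliWeight p g * A g + (1 - p) * ∑ g, bernoulliWeight p g * B g := by
  set R : (V → Bool) → ℝ := fun g => ∏ w ∈ univ.erase x, if g w then p else 1 - p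
  have hR : ∀ g b, R (update g x b) = R g := fun g b =>
    prod_congr rfl fun w hw => by simp only [update_of_ne (ne_of_mem_erase hw)]
  have fibres : ∀ F : (V → Bool) → ℝ, ∑ g, bernoulliWeight p g * F g
      = p * ∑ g with g x = true, R g * F g + (1 - p) * ∑ g with g x = false, R g * F g := by
    intro F
    rw [← sum_fiberwise univ (· x), Fintype.sum_bool, mul_sum, mul_sum]
    congr 1 <;> refine sum_congr rfl fun g hg => ?_ <;>
      rw [bernoulliWeight_eq_mul_prod_erase p x, (mem_filter.1 hg).2] <;> simp [R, mul_assoc]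
  have marginal : ∀ F : (V → Bool) → ℝ, (∀ g b, F (update g x b) = F g) → ∀ b,
      ∑ g, bernoulliWeight p g * F g = ∑ g with g x = b, R g * F g := by
    intro F hF b
    have hRF : ∀ g c, R (update g x c) * F (update g x c) = R g * F g := by simp [hR, hF]
    rw [fibres, sum_filter_apply_eq_of_update hRF true b, sum_filter_apply_eq_of_update hRF false b]
    ring
  rw [fibres, marginal A hA true, marginal B hB false]
  congr 2 <;> refine sum_congr rfl fun g hg => ?_ <;> simp [(mem_filter.1 hg).2]

theorem bernoulliProb_eq_sum_mul (p : ℝ) (E : (V → Bool) → Bool) :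
    bernoulliProb p E = ∑ g, bernoulliWeight p g * if E g then 1 else 0 := by
  simp only [bernoulliProb, sum_filter, mul_boole]

theorem bernoulliProb_ite (p : ℝ) (x : V) {A B : (V → Bool) → Bool}
    (hA : ∀ g b, A (update g x b) = A g) (hB : ∀ g b, B (update g x b) = B g) :
    bernoulliProb p (fun g => if g x then A g else B g)
      = p * bernoulliProb p A + (1 - p) * bernoulliProb p B := by
  simp only [bernoulliProb_eq_sum_mul]
  rw [← sum_bernoulliWeight_mul_ite p x (by simp [hA]) (by simp [hB])]
  refine sum_congr rfl fun g _ => ?_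
  split <;> rfl

end Bernoulli

section Law

variable {V Ω : Type*} [Fintype V] [MeasurableSpace Ω] {P : Measure Ω} [IsProbabilityMeasure P]
  {η : Ω → V → Bool} {p : ℝ}

theorem toReal_measure_eq_bernoulliWeight (hmeas : ∀ w, Measurable fun ω => η ω w)
    (hindep : iIndepFun (fun w ω => η ω w) P)
    (hopen : ∀ w, (P {ω | η ω w = true}).toReal = p)
    (g : V → Bool) : (P {ω | η ω = g}).toReal = bernoulliWeight p g := by
  have hfibre : {ω | η ω = g} = ⋂ w, {ω | η ω w = g w} := by ext; simp [funext_iff]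
  rw [hfibre, hindep.meas_iInter (s := fun w => {ω | η ω w = g w})
    fun w => ⟨{g w}, trivial, rfl⟩, ENNReal.toReal_prod]
  refine prod_congr rfl fun w _ => ?_
  cases g w
  · have hcompl : {ω | η ω w = false} = {ω | η ω w = true}ᶜ := by ext; simp
    have hw : MeasurableSet {ω | η ω w = true} := hmeas w (measurableSet_singleton true)
    rw [hcompl, ← measureReal_def, probReal_compl_eq_one_sub hw, measureReal_def, hopen w]
    rfl
  · exact hopen w

theorem toReal_measure_le_bernoulliProb [DecidableEq V]
    (hmeas : ∀ w, Measurable fun ω => η ω w)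
    (hindep : iIndepFun (fun w ω => η ω w) P)
    (hopen : ∀ w, (P {ω | η ω w = true}).toReal = p)
    (E : (V → Bool) → Bool) : (P {ω | E (η ω)}).toReal ≤ bernoulliProb p E :=
  calc (P {ω | E (η ω)}).toReal ≤ (∑ g with E g, P {ω | η ω = g}).toReal := by
        refine ENNReal.toReal_mono (ENNReal.sum_ne_top.2 fun _ _ => measure_ne_top _ _)
          ((measure_mono fun ω hω => ?_).trans (measure_biUnion_finset_le _ _))
        simpa using hω
    _ = bernoulliProb p E := by
        rw [ENNReal.toReal_sum fun _ _ => measure_ne_top _ _]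
        exact sum_congr rfl fun g _ => toReal_measure_eq_bernoulliWeight hmeas hindep hopen g

end Law

section Exploration

variable {V : Type*}

abbrev openGraph (G : SimpleGraph V) (η : V → Bool) : SimpleGraph V :=
  SimpleGraph.fromRel (fun a b => G.Adj a b ∧ η a = true ∧ η b = true)

variable {G : SimpleGraph V}

theorem openGraph_adj {η : V → Bool} {a b : V} :
    (openGraph G η).Adj a b ↔ G.Adj a b ∧ η a = true ∧ η b = true := by
  rw [SimpleGraph.fromRel_adj]
  constructor
  · rintro ⟨-, h | ⟨hab, ha, hb⟩⟩
    exacts [h, ⟨hab.symm, hb, ha⟩]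
  · exact fun h => ⟨h.1.ne, Or.inl h⟩

theorem eq_true_of_mem_openCluster {η : V → Bool} {u w : V} (hu : η u = true)
    (hw : w ∈ openCluster G η u) : η w = true := by
  obtain ⟨q⟩ := hw
  cases q.reverse with
  | nil => exact hu
  | cons h _ => exact (openGraph_adj.1 h).2.1

theorem mem_openCluster_of_adj {η : V → Bool} {u o y : V} (ho : o ∈ openCluster G η u)
    (hadj : G.Adj o y) (hηo : η o = true) (hηy : η y = true) : y ∈ openCluster G η u :=
  SimpleGraph.Reachable.trans ho (openGraph_adj.2 ⟨hadj, hηo, hηy⟩).reachable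

variable [Fintype V] [DecidableEq V] [DecidableRel G.Adj]

variable (G) in
def boundary (O K : Finset V) : Finset V := {y | y ∉ O ∧ y ∉ K ∧ ∃ o ∈ O, G.Adj o y}

theorem mem_boundary {O K : Finset V} {y : V} :
    y ∈ boundary G O K ↔ y ∉ O ∧ y ∉ K ∧ ∃ o ∈ O, G.Adj o y := by
  simp [boundary]

theorem boundary_insert_right (O K : Finset V) (x : V) :
    boundary G O (insert x K) = (boundary G O K).erase x := by
  ext y
  simp only [mem_boundary, mem_erase, mem_insert]
  tauto

theorem card_boundary_insert_left_add_one_le {O K : Finset V} {x : V}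
    (hx : x ∈ boundary G O K) :
    #(boundary G (insert x O) K) + 1 ≤ #(boundary G O K) + (G.degree x - 1) := by
  obtain ⟨-, -, o, ho, hox⟩ := mem_boundary.1 hx
  have hsub : boundary G (insert x O) K
      ⊆ (boundary G O K).erase x ∪ (G.neighborFinset x).erase o := by
    intro y hy
    obtain ⟨hyxO, hyK, o', ho', ho'y⟩ := mem_boundary.1 hy
    rw [mem_insert, not_or] at hyxO
    rcases mem_insert.1 ho' with rfl | ho'
    · exact mem_union_right _ (mem_erase.2 ⟨fun h => hyxO.2 (h ▸ ho), by simpa using ho'y⟩)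
    · exact mem_union_left _
        (mem_erase.2 ⟨hyxO.1, mem_boundary.2 ⟨hyxO.2, hyK, o', ho', ho'y⟩⟩)
  have hcard := (card_le_card hsub).trans (card_union_le _ _)
  rw [card_erase_of_mem hx, card_erase_of_mem (by simpa using hox.symm),
    SimpleGraph.card_neighborFinset_eq_degree] at hcard
  have : 0 < #(boundary G O K) := card_pos.2 ⟨x, hx⟩
  have : 0 < G.degree x := G.degree_pos_iff_exists_adj x |>.2 ⟨o, hox.symm⟩
  omega

theorem boundary_nonempty_of_card_lt_ncard {η : V → Bool} {u : V} {O K : Finset V}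
    (huO : u ∈ O) (hK : ∀ w ∈ K, η w = false) (hO : #O < (openCluster G η u).ncard) :
    (boundary G O K).Nonempty := by
  by_contra hB
  have hclosed : ∀ a b, (openGraph G η).Walk a b → a ∈ O → b ∈ O := by
    intro a b q
    induction q with
    | nil => exact id
    | cons hadj _ ih =>
      intro ha
      obtain ⟨hab, -, hb⟩ := openGraph_adj.1 hadj
      refine ih (by_contra fun hbO =>
        hB ⟨_, mem_boundary.2 ⟨hbO, fun hbK => ?_, _, ha, hab⟩⟩)
      simp [hK _ hbK] at hb
  have hsub : openCluster G η u ⊆ O := fun w ⟨q⟩ => hclosed u w q huO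
  have := Set.ncard_le_ncard hsub O.finite_toSet
  rw [Set.ncard_coe_finset] at this
  omega

variable (G) in
/-- `explore G η M t O K` continues an exploration that has found the open vertices `O` and the
closed vertices `K`, with `M` queries left, and succeeds once `t` further open vertices are
found. The queried vertex depends on `O` and `K` only, not on `η`. -/
noncomputable def explore (η : V → Bool) : ℕ → ℕ → Finset V → Finset V → Bool
  | _, 0, _, _ => true
  | 0, _ + 1, _, _ => false
  | M + 1, t + 1, O, K =>
    if h : (boundary G O K).Nonempty then
      if η h.choose then explore η M t (insert h.choose O) K
      else explore η M (t + 1) O (insert h.choose K)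
    else false

theorem explore_congr {η η' : V → Bool} (M t : ℕ) (O K : Finset V)
    (h : ∀ w, w ∉ O → w ∉ K → η w = η' w) :
    explore G η M t O K = explore G η' M t O K := by
  induction M generalizing t O K with
  | zero => cases t <;> rfl
  | succ M ih =>
    cases t with
    | zero => rfl
    | succ t =>
      simp only [explore]
      by_cases hB : (boundary G O K).Nonempty
      · obtain ⟨hxO, hxK, -⟩ := mem_boundary.1 hB.choose_spec
        simp only [dif_pos hB, h _ hxO hxK]
        split
        · exact ih _ _ _ fun w hwO hwK => h w (fun hw => hwO (mem_insert_of_mem hw)) hwK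
        · exact ih _ _ _ fun w hwO hwK => h w hwO fun hw => hwK (mem_insert_of_mem hw)
      · simp only [dif_neg hB]

/-- `hbudget` is preserved by each query, as an open vertex adds at most `Δ - 1` vertices to the
boundary. -/
theorem explore_eq_true_of_le_ncard {Δ : ℕ} (hdeg : ∀ w, G.degree w ≤ Δ) {η : V → Bool}
    {u : V} (hu : η u = true) (M t : ℕ) (O K : Finset V) (huO : u ∈ O)
    (hO : ↑O ⊆ openCluster G η u) (hK : ∀ w ∈ K, η w = false)
    (hcard : #O + t ≤ (openCluster G η u).ncard)
    (hbudget : #(boundary G O K) + (Δ - 1) * t ≤ M + (Δ - 1)) :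
    explore G η M t O K = true := by
  induction M generalizing t O K with
  | zero =>
    obtain _ | t := t
    · rfl
    have := card_pos.2 (boundary_nonempty_of_card_lt_ncard (G := G) huO hK (by omega))
    rw [mul_add_one] at hbudget
    omega
  | succ M ih =>
    obtain _ | t := t
    · rfl
    have hB := boundary_nonempty_of_card_lt_ncard (G := G) huO hK (by omega)
    obtain ⟨hxO, -, o, ho, hox⟩ := mem_boundary.1 hB.choose_spec
    rw [mul_add_one] at hbudget
    simp only [explore, dif_pos hB]
    split
    next hx =>
      have := card_boundary_insert_left_add_one_le hB.choose_spec
      have := hdeg hB.choose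
      refine ih t _ K (mem_insert_of_mem huO) ?_ hK ?_ (by omega)
      · rw [coe_insert, Set.insert_subset_iff]
        exact ⟨mem_openCluster_of_adj (hO ho) hox (eq_true_of_mem_openCluster hu (hO ho)) hx,
          hO⟩
      · rw [card_insert_of_notMem hxO]
        omega
    next hx =>
      refine ih (t + 1) O _ huO hO ?_ hcard ?_
      · intro w hw
        rcases mem_insert.1 hw with rfl | hw
        exacts [by simpa using hx, hK w hw]
      · rw [boundary_insert_right, card_erase_of_mem hB.choose_spec, mul_add_one]
        have := card_pos.2 hB
        omega

theorem explore_pair_eq_true_of_le_ncard {Δ : ℕ} (hdeg : ∀ w, G.degree w ≤ Δ) {u v : V}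
    (huv : G.Adj u v) {η : V → Bool} {m : ℕ}
    (hm : m ≤ (openCluster G (update (update η u true) v true) u).ncard) :
    explore G η ((Δ - 1) * (m - 2 + 1)) (m - 2) {u, v} ∅ = true := by
  set η' := update (update η u true) v true
  have hu : η' u = true := by simp [η', update_of_ne huv.ne]
  have hv : η' v = true := by simp [η']
  have huv' : ({u, v} : Set V) ⊆ openCluster G η' u :=
    Set.pair_subset_iff.2 ⟨.refl u, mem_openCluster_of_adj (.refl u) huv hu hv⟩
  have h2 := Set.ncard_le_ncard huv' (Set.toFinite _)
  rw [Set.ncard_pair huv.ne] at h2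
  have hbdry := card_boundary_insert_left_add_one_le (G := G) (O := {v}) (K := ∅)
    (mem_boundary.2 ⟨by simpa using huv.ne, by simp, v, mem_singleton_self v, huv.symm⟩)
  have hv_bdry : #(boundary G {v} ∅) ≤ G.degree v := by
    rw [← SimpleGraph.card_neighborFinset_eq_degree]
    refine card_le_card fun y hy => ?_
    obtain ⟨-, -, o, ho, hoy⟩ := mem_boundary.1 hy
    rw [mem_singleton.1 ho] at hoy
    simpa using hoy
  have := hdeg u
  have := hdeg v
  rw [explore_congr (η' := η') _ _ _ _ fun w hw _ => ?_]
  · refine explore_eq_true_of_le_ncard hdeg hu _ _ _ _ (mem_insert_self u {v})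
      (by simpa using huv') (by simp) (by rw [card_pair huv.ne]; omega) ?_
    rw [mul_add_one]
    omega
  · simp only [mem_insert, mem_singleton, not_or] at hw
    simp [η', update_of_ne hw.1, update_of_ne hw.2]

/-- The Chernoff bound `(1 - p + p y) ^ M / y ^ t` for `P(Bin(M, p) ≥ t)` satisfies the one-query
recursion of `explore` with equality, so it bounds every adaptive exploration. -/
theorem bernoulliProb_explore_le {p y : ℝ} (hp0 : 0 ≤ p) (hp1 : p ≤ 1) (hy : 1 ≤ y)
    (M t : ℕ) (O K : Finset V) :
    bernoulliProb p (fun g => explore G g M t O K) ≤ (1 - p + p * y) ^ M / y ^ t := by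
  have hc : 1 ≤ 1 - p + p * y := by nlinarith
  induction M generalizing t O K with
  | zero =>
    obtain _ | t := t
    · simp [explore, bernoulliProb, sum_bernoulliWeight]
    · simp [explore, bernoulliProb]
      positivity
  | succ M ih =>
    obtain _ | t := t
    · simpa [explore, bernoulliProb, sum_bernoulliWeight] using one_le_pow₀ hc
    by_cases hB : (boundary G O K).Nonempty
    · have hinv : ∀ t' O' K', hB.choose ∈ O' ∨ hB.choose ∈ K' → ∀ g b,
          explore G (update g hB.choose b) M t' O' K' = explore G g M t' O' K' :=
        fun t' O' K' hx g b => explore_congr _ _ _ _ fun w hwO hwK => update_of_ne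
          (by rintro rfl; exact hx.elim hwO hwK) _ _
      simp only [explore, dif_pos hB]
      rw [bernoulliProb_ite p _ (hinv _ _ _ (.inl (mem_insert_self _ _)))
        (hinv _ _ _ (.inr (mem_insert_self _ _)))]
      calc _ ≤ p * ((1 - p + p * y) ^ M / y ^ t)
            + (1 - p) * ((1 - p + p * y) ^ M / y ^ (t + 1)) := by
            have := ih t (insert hB.choose O) K
            have := ih (t + 1) O (insert hB.choose K)
            gcongr
        _ = (1 - p + p * y) ^ (M + 1) / y ^ (t + 1) := by
            field_simp
            ring
    · simp [explore, dif_neg hB, bernoulliProb]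
      positivity

end Exploration

theorem chernoffRate_lt_one {p : ℝ} (hp : 0 < p) {Δ : ℕ} (hΔ : 3 ≤ Δ)
    (hsub : p * ((Δ : ℝ) - 1) < 1) :
    p * ((Δ : ℝ) - 1) ^ (Δ - 1) * (1 - p) ^ (Δ - 2) / ((Δ : ℝ) - 2) ^ (Δ - 2) < 1 := by
  obtain ⟨k, rfl⟩ : ∃ k, Δ = k + 2 := ⟨Δ - 2, by omega⟩
  have hk : (1 : ℝ) ≤ k := by exact_mod_cast (by omega : 1 ≤ k)
  have h1 : ((k + 2 : ℕ) : ℝ) - 1 = k + 1 := by push_cast; ring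
  have h2 : ((k + 2 : ℕ) : ℝ) - 2 = k := by push_cast; ring
  rw [h1, h2, show k + 2 - 1 = k + 1 by omega, show k + 2 - 2 = k by omega]
  rw [h1] at hsub
  -- with `s = p (Δ - 1)`, the rate is `s (1 + (1 - s) / (Δ - 2)) ^ (Δ - 2) ≤ s e^{1 - s} < 1`
  set s := p * (k + 1)
  have hs : 0 < s := by positivity
  have hc : ((1 - p) * (k + 1) / k) ^ k ≤ Real.exp (1 - s) := by
    have := Real.one_sub_div_pow_le_exp_neg (n := k) (t := s - 1) (by linarith)
    convert this using 2
    · field_simp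
      ring
    · ring
  have hs_exp : s * Real.exp (1 - s) < 1 := by
    have := Real.add_one_lt_exp (x := s - 1) (by linarith)
    rw [show 1 - s = -(s - 1) by ring, Real.exp_neg, ← div_eq_mul_inv, div_lt_one (by positivity)]
    linarith
  calc p * (k + 1) ^ (k + 1) * (1 - p) ^ k / k ^ k = s * ((1 - p) * (k + 1) / k) ^ k := by
        rw [div_pow, mul_pow, pow_succ]
        ring
    _ ≤ s * Real.exp (1 - s) := by gcongr
    _ < 1 := hs_exp

theorem one_sub_add_mul_pow_eq {p : ℝ} (hp : 0 < p) {Δ : ℕ} (hΔ : 3 ≤ Δ) :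
    (1 - p + p * ((1 - p) / (p * ((Δ : ℝ) - 2)))) ^ (Δ - 1)
      = (1 - p) / (p * ((Δ : ℝ) - 2))
        * (p * ((Δ : ℝ) - 1) ^ (Δ - 1) * (1 - p) ^ (Δ - 2) / ((Δ : ℝ) - 2) ^ (Δ - 2)) := by
  obtain ⟨k, rfl⟩ : ∃ k, Δ = k + 2 := ⟨Δ - 2, by omega⟩
  have hk : (0 : ℝ) < k := by exact_mod_cast (by omega : 0 < k)
  have h1 : ((k + 2 : ℕ) : ℝ) - 1 = k + 1 := by push_cast; ring
  have h2 : ((k + 2 : ℕ) : ℝ) - 2 = k := by push_cast; ring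
  rw [h1, h2, show k + 2 - 1 = k + 1 by omega, show k + 2 - 2 = k by omega]
  have hc : 1 - p + p * ((1 - p) / (p * k)) = (1 - p) * (k + 1) / k := by
    field_simp
  rw [hc, div_pow, mul_pow]
  field_simp
  ring

theorem pow_succ_div_pow_le {x r : ℝ} (hx : 0 < x) (hr0 : 0 < r) (hr1 : r < 1)
    (hxr : 1 ≤ x * r) {t m : ℕ} (hm : m ≤ t + 2) :
    (x * r) ^ (t + 1) / x ^ t ≤ 2 / (1 - r) * x ^ 2 * r ^ m :=
  calc (x * r) ^ (t + 1) / x ^ t = x * r ^ (t + 1) := by field_simp; ring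
    _ ≤ x * r ^ (t + 1) * (x * r) := le_mul_of_one_le_right (by positivity) hxr
    _ = x ^ 2 * r ^ (t + 2) := by ring
    _ ≤ x ^ 2 * r ^ m :=
        mul_le_mul_of_nonneg_left (pow_le_pow_of_le_one hr0.le hr1.le hm) (by positivity)
    _ ≤ 2 / (1 - r) * x ^ 2 * r ^ m := by
        rw [mul_assoc]
        refine le_mul_of_one_le_left (by positivity) ?_
        rw [le_div_iff₀ (by linarith)]
        linarith

end SitePercolation

open SitePercolation in
theorem percolation_cluster_tail_general {V : Type*} [Fintype V] [DecidableEq V]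
    (G : SimpleGraph V) [DecidableRel G.Adj] (Δ : ℕ) (hΔ : 3 ≤ Δ)
    (hdeg : ∀ w, G.degree w ≤ Δ)
    (p₀ : ℝ) (hp : p₀ ∈ Set.Ioo (0:ℝ) 1) (hsub : p₀ * ((Δ : ℝ) - 1) < 1)
    (u v : V) (huv : G.Adj u v)
    {Ω : Type*} [MeasurableSpace Ω] (P : Measure Ω) [IsProbabilityMeasure P]
    (η : Ω → V → Bool) (hmeas : ∀ w, Measurable (fun ω => η ω w))
    (hindep : iIndepFun (fun w ω => η ω w) P)
    (hopen : ∀ w, (P {ω | η ω w = true}).toReal = p₀)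
    (ξstar : ℝ)
    (hξstar : ξstar = Real.log (((Δ : ℝ) - 2) ^ (Δ - 2)
      / (p₀ * ((Δ : ℝ) - 1) ^ (Δ - 1) * (1 - p₀) ^ (Δ - 2))))
    (m : ℕ) :
    (P {ω | m ≤ Set.ncard (openCluster G
        (Function.update (Function.update (η ω) u true) v true) u)}).toReal
      ≤ (2 / (1 - Real.exp (-ξstar))) * ((1 - p₀) / (p₀ * ((Δ : ℝ) - 2))) ^ 2
          * Real.exp (-ξstar * m) := by
  obtain ⟨hp0, hp1⟩ := hp
  have hΔ2 : (0 : ℝ) < Δ - 2 := by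
    have : (3 : ℝ) ≤ Δ := by exact_mod_cast hΔ
    linarith
  have hΔ1 : (0 : ℝ) < Δ - 1 := by linarith
  have hq : 0 < 1 - p₀ := by linarith
  set x := (1 - p₀) / (p₀ * ((Δ : ℝ) - 2))
  set r := p₀ * ((Δ : ℝ) - 1) ^ (Δ - 1) * (1 - p₀) ^ (Δ - 2) / ((Δ : ℝ) - 2) ^ (Δ - 2)
  have hr0 : 0 < r := by positivity
  have hr : Real.exp (-ξstar) = r := by
    rw [hξstar, Real.exp_neg, Real.exp_log (by positivity), inv_div]
  have hx : 1 ≤ x := by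
    rw [le_div_iff₀ (by positivity)]
    linarith
  have hxr := one_sub_add_mul_pow_eq hp0 hΔ
  set E : (V → Bool) → Bool := fun g => explore G g ((Δ - 1) * (m - 2 + 1)) (m - 2) {u, v} ∅
  rw [show -ξstar * m = m * -ξstar by ring, Real.exp_nat_mul, hr]
  calc _ ≤ (P {ω | E (η ω)}).toReal := ENNReal.toReal_mono (measure_ne_top _ _)
        (measure_mono fun ω => explore_pair_eq_true_of_le_ncard hdeg huv)
    _ ≤ bernoulliProb p₀ E := toReal_measure_le_bernoulliProb hmeas hindep hopen E
    _ ≤ (1 - p₀ + p₀ * x) ^ ((Δ - 1) * (m - 2 + 1)) / x ^ (m - 2) :=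
        bernoulliProb_explore_le hp0.le hp1.le hx _ _ _ _
    _ = (x * r) ^ (m - 2 + 1) / x ^ (m - 2) := by rw [pow_mul, hxr]
    _ ≤ _ := pow_succ_div_pow_le (by positivity) hr0
        (chernoffRate_lt_one hp0 hΔ hsub) (hxr ▸ one_le_pow₀ (by nlinarith)) (by omega)

/-- **Exponential tail for the percolation cluster of an edge.**
In Bernoulli(`p₀`) site percolation on a graph of maximal degree `Δ`, with the two
endpoints of an edge `(u,v)` forced open, the open cluster `C(u,v)` containing `{u,v}`
satisfies, for every `m ≥ 2`,
`P(|C(u,v)| ≥ m) ≤ (2/(1−e^{−ξ_*}))·((1−p₀)/(p₀(Δ−2)))²·e^{−ξ_* m}`,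
where `ξ_* = log((Δ−2)^{Δ−2}/(p₀(Δ−1)^{Δ−1}(1−p₀)^{Δ−2}))`. -/
theorem percolation_cluster_tail {V : Type*} [Fintype V] [DecidableEq V]
    (G : SimpleGraph V) [DecidableRel G.Adj] (Δ : ℕ) (hΔ : 3 ≤ Δ)
    (hdeg : ∀ w, G.degree w ≤ Δ)
    (p₀ : ℝ) (hp : p₀ ∈ Set.Ioo (0:ℝ) 1) (hsub : p₀ * ((Δ : ℝ) - 1) < 1)
    (u v : V) (huv : G.Adj u v)
    {Ω : Type*} [MeasurableSpace Ω] (P : Measure Ω) [IsProbabilityMeasure P]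
    (η : Ω → V → Bool) (hmeas : ∀ w, Measurable (fun ω => η ω w))
    (hindep : iIndepFun (fun w ω => η ω w) P)
    (hopen : ∀ w, (P {ω | η ω w = true}).toReal = p₀)
    (ξstar : ℝ)
    (hξstar : ξstar = Real.log (((Δ : ℝ) - 2) ^ (Δ - 2)
      / (p₀ * ((Δ : ℝ) - 1) ^ (Δ - 1) * (1 - p₀) ^ (Δ - 2))))
    (m : ℕ) (hm : 2 ≤ m) :
    (P {ω | m ≤ Set.ncard (openCluster G
        (Function.update (Function.update (η ω) u true) v true) u)}).toReal
      ≤ (2 / (1 - Real.exp (-ξstar))) * ((1 - p₀) / (p₀ * ((Δ : ℝ) - 2))) ^ 2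
          * Real.exp (-ξstar * m) :=
  percolation_cluster_tail_general G Δ hΔ hdeg p₀ hp hsub u v huv P η hmeas hindep hopen ξstar
    hξstar m
end

section
/- Let μ be a probability measure on a finite set Ω and φ: D → ℝ convex. Suppose (Y_t)_{t∈[0,1]} is a denoising process for μ and θ ∈ [0,1] is such that (i) the conditional law Law(Y_1 | Y_θ) satisfies K-approximate tensorization of φ-entropy (for every realization of Y_θ), and (ii) (Y_t) satisfies R-approximate conservation of φ-entropy up to time θ, i.e. Ent^φ[f(Y_1)] ≤ R·E[Ent^φ[f(Y_1) | Y_θ]] for all f. Then μ satisfies KR-approximate tensorization of φ-entropy. -/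
open scoped BigOperators

noncomputable section

variable {n : ℕ}

open Finset

/-- `φ`-entropy of `f` with respect to the probability vector `p` on `{0,1}^n`:
`Ent^φ_p[f] = E_p[φ(f)] − φ(E_p[f])`. -/
def phiEnt (φ : ℝ → ℝ) (p f : (Fin n → Bool) → ℝ) : ℝ :=
  (∑ σ, p σ * φ (f σ)) - φ (∑ σ, p σ * f σ)

/-- Conditional mean of `f` given all coordinates except `i` (evaluated at `σ`). -/
def condMean (p f : (Fin n → Bool) → ℝ) (i : Fin n) (σ : Fin n → Bool) : ℝ :=
  (∑ b, p (Function.update σ i b) * f (Function.update σ i b)) /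
    (∑ b, p (Function.update σ i b))

/-- `E_p[Ent^φ(f | X_{-i})]`, the single-site conditional `φ`-entropy term. -/
def sitePhiTerm (φ : ℝ → ℝ) (p f : (Fin n → Bool) → ℝ) (i : Fin n) : ℝ :=
  ∑ σ, p σ * (φ (f σ) - φ (condMean p f i σ))

lemma sum_pair_update (i : Fin n) (F : (Fin n → Bool) → ℝ) :
    ∑ σ : Fin n → Bool, ∑ b, F (Function.update σ i b) = 2 * ∑ σ, F σ := by
  have hg : Function.Involutive (fun σ : Fin n → Bool => Function.update σ i (!σ i)) := by
    intro σ
    simp [Function.update_idem]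
  have h1 : ∀ σ : Fin n → Bool,
      ∑ b, F (Function.update σ i b) = F σ + F (Function.update σ i (!σ i)) := by
    intro σ
    rw [Fintype.sum_bool]
    cases h : σ i
    · have h2 : Function.update σ i false = σ := by
        conv_rhs => rw [← Function.update_eq_self i σ]
        rw [h]
      rw [h2]; simp [add_comm]
    · have h2 : Function.update σ i true = σ := by
        conv_rhs => rw [← Function.update_eq_self i σ]
        rw [h]
      rw [h2]; simp
  calc ∑ σ : Fin n → Bool, ∑ b, F (Function.update σ i b)
      = ∑ σ : Fin n → Bool, (F σ + F (Function.update σ i (!σ i))) := by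
        exact Finset.sum_congr rfl fun σ _ => h1 σ
    _ = (∑ σ, F σ) + ∑ σ : Fin n → Bool, F (Function.update σ i (!σ i)) := by
        rw [Finset.sum_add_distrib]
    _ = 2 * ∑ σ, F σ := by
        have h3 := Equiv.sum_comp (hg.toPerm _) F
        simp only [Function.Involutive.coe_toPerm] at h3
        rw [h3]; ring

lemma jensen_div {ι : Type*} [Fintype ι] (φ : ℝ → ℝ) (hφ : ConvexOn ℝ Set.univ φ)
    (Q N : ι → ℝ) (hQ : ∀ s, 0 ≤ Q s) (hN0 : ∀ s, Q s = 0 → N s = 0) :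
    (∑ s, Q s) * φ ((∑ s, N s) / (∑ s, Q s)) ≤ ∑ s, Q s * φ (N s / Q s) := by
  rcases (Finset.sum_nonneg fun s _ => hQ s).eq_or_lt with hP | hP
  · have hz : ∀ s, Q s = 0 := fun s =>
      (Finset.sum_eq_zero_iff_of_nonneg (fun s _ => hQ s)).1 hP.symm s (mem_univ s)
    simp [hz]
  · have key : ∀ s, Q s * (N s / Q s) = N s := by
      intro s
      rcases eq_or_ne (Q s) 0 with h | h
      · simp [h, hN0 s h]
      · rw [mul_comm, div_mul_cancel₀ _ h]
    have hj := hφ.map_centerMass_le (t := Finset.univ) (w := Q)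
      (p := fun s => N s / Q s) (fun s _ => hQ s) hP (fun s _ => Set.mem_univ _)
    rw [Finset.centerMass, Finset.centerMass] at hj
    simp only [smul_eq_mul, Function.comp, key] at hj
    have h2 := mul_le_mul_of_nonneg_left hj hP.le
    calc (∑ s, Q s) * φ ((∑ s, N s) / (∑ s, Q s))
        = (∑ s, Q s) * φ ((∑ s, Q s)⁻¹ * ∑ s, N s) := by rw [div_eq_inv_mul]
      _ ≤ (∑ s, Q s) * ((∑ s, Q s)⁻¹ * ∑ s, Q s * φ (N s / Q s)) := h2
      _ = ∑ s, Q s * φ (N s / Q s) := by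
          rw [← mul_assoc, mul_inv_cancel₀ hP.ne', one_mul]

/-- **From conservation of `φ`-entropy to approximate tensorization.**
Model a denoising process by the joint law `q` of `(Y_1, Y_θ)` on `{0,1}^n × S`:
`μ` is the law of `Y_1` and `ν s` is the conditional law of `Y_1` given `Y_θ = s`.
If every conditional law `ν s` satisfies `K`-approximate tensorization of `φ`-entropy
and the process conserves `φ`-entropy up to time `θ` with constant `R`
(`Ent^φ_μ[f] ≤ R·Σ_s P(Y_θ = s)·Ent^φ_{ν s}[f]`), then `μ` satisfies
`K·R`-approximate tensorization of `φ`-entropy. -/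
theorem tensorization_from_conservation {S : Type*} [Fintype S]
    (φ : ℝ → ℝ) (hφ : ConvexOn ℝ Set.univ φ)
    (q : (Fin n → Bool) → S → ℝ) (hq0 : ∀ σ s, 0 ≤ q σ s)
    (hq1 : ∑ σ, ∑ s, q σ s = 1)
    (K R : ℝ) (hK : 0 < K) (hR : 0 < R)
    (hAT : ∀ s : S, 0 < (∑ σ, q σ s) →
      ∀ f : (Fin n → Bool) → ℝ,
        phiEnt φ (fun σ => q σ s / ∑ σ', q σ' s) f
          ≤ K * ∑ i, sitePhiTerm φ (fun σ => q σ s / ∑ σ', q σ' s) f i)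
    (hcons : ∀ f : (Fin n → Bool) → ℝ,
      phiEnt φ (fun σ => ∑ s, q σ s) f
        ≤ R * ∑ s, (∑ σ, q σ s)
            * phiEnt φ (fun σ => q σ s / ∑ σ', q σ' s) f) :
    ∀ f : (Fin n → Bool) → ℝ,
      phiEnt φ (fun σ => ∑ s, q σ s) f
        ≤ K * R * ∑ i, sitePhiTerm φ (fun σ => ∑ s, q σ s) f i := by
  intro f
  have hw0 : ∀ s, 0 ≤ ∑ σ, q σ s := fun s => Finset.sum_nonneg fun σ _ => hq0 σ s
  have hqz : ∀ s, (∑ σ, q σ s) = 0 → ∀ σ, q σ s = 0 := fun s hs σ =>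
    (Finset.sum_eq_zero_iff_of_nonneg (fun σ _ => hq0 σ s)).1 hs σ (mem_univ σ)
  -- Step A: per-coordinate comparison of conditional entropy terms
  have stepA : ∀ i, ∑ s, (∑ σ, q σ s) * sitePhiTerm φ (fun σ => q σ s / ∑ σ', q σ' s) f i
      ≤ sitePhiTerm φ (fun σ => ∑ s, q σ s) f i := by
    intro i
    set cs : S → (Fin n → Bool) → ℝ := fun s σ =>
      (∑ b, q (Function.update σ i b) s * f (Function.update σ i b)) /
        (∑ b, q (Function.update σ i b) s) with hcs
    have hterm : ∀ s, (∑ σ, q σ s) * sitePhiTerm φ (fun σ => q σ s / ∑ σ', q σ' s) f i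
        = ∑ σ, q σ s * (φ (f σ) - φ (cs s σ)) := by
      intro s
      rcases eq_or_ne (∑ σ, q σ s) 0 with h | h
      · rw [h]
        simp [hqz s h]
      · have hcm : ∀ σ, condMean (fun σ => q σ s / ∑ σ', q σ' s) f i σ = cs s σ := by
          intro σ
          unfold condMean
          rw [hcs]
          simp only [div_mul_eq_mul_div]
          rw [← Finset.sum_div, ← Finset.sum_div, div_div_div_cancel_right₀ h]
        unfold sitePhiTerm
        rw [Finset.mul_sum]
        refine Finset.sum_congr rfl fun σ _ => ?_
        rw [hcm σ, ← mul_assoc, mul_div_cancel₀ _ h]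
    rw [Finset.sum_congr rfl fun s _ => hterm s]
    -- expand both sides
    have expandL : ∀ s, ∑ σ, q σ s * (φ (f σ) - φ (cs s σ))
        = (∑ σ, q σ s * φ (f σ)) - ∑ σ, q σ s * φ (cs s σ) := by
      intro s
      rw [← Finset.sum_sub_distrib]
      exact Finset.sum_congr rfl fun σ _ => by ring
    unfold sitePhiTerm
    have expandR : ∑ σ, (∑ s, q σ s) * (φ (f σ) - φ (condMean (fun σ => ∑ s, q σ s) f i σ))
        = (∑ σ, (∑ s, q σ s) * φ (f σ))
          - ∑ σ, (∑ s, q σ s) * φ (condMean (fun σ => ∑ s, q σ s) f i σ) := by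
      rw [← Finset.sum_sub_distrib]
      exact Finset.sum_congr rfl fun σ _ => by ring
    rw [Finset.sum_congr rfl fun s _ => expandL s, expandR, Finset.sum_sub_distrib]
    have hfirst : ∑ s, ∑ σ, q σ s * φ (f σ) = ∑ σ, (∑ s, q σ s) * φ (f σ) := by
      rw [Finset.sum_comm]
      exact Finset.sum_congr rfl fun σ _ => (Finset.sum_mul _ _ _).symm
    rw [hfirst]
    apply sub_le_sub_left
    -- key Jensen step:
    -- ∑ σ μσ φ(m σ) ≤ ∑ s ∑ σ q σ s φ(cs s σ)
    have key : ∀ σ : Fin n → Bool,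
        (∑ b, (∑ s, q (Function.update σ i b) s)) * φ (condMean (fun σ => ∑ s, q σ s) f i σ)
          ≤ ∑ s, (∑ b, q (Function.update σ i b) s) * φ (cs s σ) := by
      intro σ
      have hswap1 : ∑ s, ∑ b, q (Function.update σ i b) s
          = ∑ b, ∑ s, q (Function.update σ i b) s := Finset.sum_comm
      have hswap2 : ∑ s, ∑ b, q (Function.update σ i b) s * f (Function.update σ i b)
          = ∑ b, (∑ s, q (Function.update σ i b) s) * f (Function.update σ i b) := by
        rw [Finset.sum_comm]
        exact Finset.sum_congr rfl fun b _ => (Finset.sum_mul _ _ _).symm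
      have hj := jensen_div φ hφ (fun s => ∑ b, q (Function.update σ i b) s)
        (fun s => ∑ b, q (Function.update σ i b) s * f (Function.update σ i b))
        (fun s => Finset.sum_nonneg fun b _ => hq0 _ s)
        (fun s hs => by
          have hz : ∀ b ∈ (Finset.univ : Finset Bool), q (Function.update σ i b) s = 0 :=
            (Finset.sum_eq_zero_iff_of_nonneg (fun b _ => hq0 _ s)).1 hs
          exact Finset.sum_eq_zero fun b hb => by rw [hz b hb, zero_mul])
      rw [hswap1, hswap2] at hj
      unfold condMean
      exact hj
    have hpairL := sum_pair_update i
      (fun σ => (∑ s, q σ s) * φ (condMean (fun σ => ∑ s, q σ s) f i σ))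
    have hpairR : ∀ s, ∑ σ : Fin n → Bool, ∑ b,
        q (Function.update σ i b) s * φ (cs s (Function.update σ i b))
        = 2 * ∑ σ, q σ s * φ (cs s σ) :=
      fun s => sum_pair_update i (fun σ => q σ s * φ (cs s σ))
    have hminv : ∀ σ b, condMean (fun σ => ∑ s, q σ s) f i (Function.update σ i b)
        = condMean (fun σ => ∑ s, q σ s) f i σ := by
      intro σ b
      unfold condMean
      simp only [Function.update_idem]
    have hcsinv : ∀ s σ b, cs s (Function.update σ i b) = cs s σ := by
      intro s σ b
      rw [hcs]
      simp only [Function.update_idem]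
    have h2 : 2 * ∑ σ : Fin n → Bool,
        (∑ s, q σ s) * φ (condMean (fun σ => ∑ s, q σ s) f i σ)
        ≤ 2 * ∑ s, ∑ σ, q σ s * φ (cs s σ) := by
      rw [← hpairL]
      have hL : ∑ σ : Fin n → Bool, ∑ b,
          (∑ s, q (Function.update σ i b) s)
            * φ (condMean (fun σ => ∑ s, q σ s) f i (Function.update σ i b))
          = ∑ σ : Fin n → Bool, (∑ b, (∑ s, q (Function.update σ i b) s))
            * φ (condMean (fun σ => ∑ s, q σ s) f i σ) := by
        refine Finset.sum_congr rfl fun σ _ => ?_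
        rw [Finset.sum_mul]
        exact Finset.sum_congr rfl fun b _ => by rw [hminv σ b]
      rw [hL]
      calc ∑ σ : Fin n → Bool, (∑ b, (∑ s, q (Function.update σ i b) s))
            * φ (condMean (fun σ => ∑ s, q σ s) f i σ)
          ≤ ∑ σ : Fin n → Bool, ∑ s, (∑ b, q (Function.update σ i b) s) * φ (cs s σ) :=
            Finset.sum_le_sum fun σ _ => key σ
        _ = ∑ s, ∑ σ : Fin n → Bool, (∑ b, q (Function.update σ i b) s) * φ (cs s σ) :=
            Finset.sum_comm
        _ = ∑ s, ∑ σ : Fin n → Bool, ∑ b,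
              q (Function.update σ i b) s * φ (cs s (Function.update σ i b)) := by
            refine Finset.sum_congr rfl fun s _ => Finset.sum_congr rfl fun σ _ => ?_
            rw [Finset.sum_mul]
            exact Finset.sum_congr rfl fun b _ => by rw [hcsinv s σ b]
        _ = ∑ s, 2 * ∑ σ, q σ s * φ (cs s σ) :=
            Finset.sum_congr rfl fun s _ => hpairR s
        _ = 2 * ∑ s, ∑ σ, q σ s * φ (cs s σ) := by rw [← Finset.mul_sum]
    linarith
  -- Step B: conservation + per-measure tensorization
  have step2 : ∑ s, (∑ σ, q σ s) * phiEnt φ (fun σ => q σ s / ∑ σ', q σ' s) f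
      ≤ ∑ s, (∑ σ, q σ s)
          * (K * ∑ i, sitePhiTerm φ (fun σ => q σ s / ∑ σ', q σ' s) f i) := by
    refine Finset.sum_le_sum fun s _ => ?_
    rcases (hw0 s).lt_or_eq with h | h
    · exact mul_le_mul_of_nonneg_left (hAT s h f) (hw0 s)
    · rw [← h, zero_mul, zero_mul]
  have step3 : ∑ s, (∑ σ, q σ s)
        * (K * ∑ i, sitePhiTerm φ (fun σ => q σ s / ∑ σ', q σ' s) f i)
      = K * ∑ i, ∑ s, (∑ σ, q σ s) * sitePhiTerm φ (fun σ => q σ s / ∑ σ', q σ' s) f i := by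
    simp_rw [Finset.mul_sum]
    rw [Finset.sum_comm]
    exact Finset.sum_congr rfl fun i _ => Finset.sum_congr rfl fun s _ => by ring
  calc phiEnt φ (fun σ => ∑ s, q σ s) f
      ≤ R * ∑ s, (∑ σ, q σ s) * phiEnt φ (fun σ => q σ s / ∑ σ', q σ' s) f := hcons f
    _ ≤ R * (K * ∑ i, ∑ s, (∑ σ, q σ s)
          * sitePhiTerm φ (fun σ => q σ s / ∑ σ', q σ' s) f i) := by
        rw [← step3]
        exact mul_le_mul_of_nonneg_left step2 hR.le
    _ ≤ R * (K * ∑ i, sitePhiTerm φ (fun σ => ∑ s, q σ s) f i) := by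
        refine mul_le_mul_of_nonneg_left (mul_le_mul_of_nonneg_left ?_ hK.le) hR.le
        exact Finset.sum_le_sum fun i _ => stepA i
    _ = K * R * ∑ i, sitePhiTerm φ (fun σ => ∑ s, q σ s) f i := by ring


end
end

section
/- Let (Y_t)_{t∈[0,1]} be the edge-field denoising process for a distribution μ on {0,1}^V over a graph G=(V,E), and fix θ ∈ (0,1). Suppose that for every subset Λ ⊆ V and every feasible pinning τ, the second-order correlation matrix of the edge-tilted measure satisfies λ_max(Cor^{(2)}_{(1−θ')⊗μ^τ}) ≤ C for all θ' ∈ [0, θ]. Then (Y_t) is spectrally (χ²-entropically) stable with rate C at every time up to θ. -/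
open scoped BigOperators Classical

noncomputable section

variable {V : Type*} [Fintype V] [DecidableEq V]

/-- The event that both endpoints of the edge `e` carry the spin `1`. -/
def bothOnes (σ : V → Bool) (e : Sym2 V) : Prop := ∀ v ∈ e, σ v = true

/-- Number of edges of `G` whose two endpoints both carry the spin `1` in `σ`. -/
def mEdges (G : SimpleGraph V) [DecidableRel G.Adj] (σ : V → Bool) : ℕ :=
  (G.edgeFinset.filter (bothOnes σ)).card

/-- Weight of `σ` under the vertex-pinned, edge-tilted measure `(1−θ')⊗μ^τ`
(pinning the vertices of `Λ` to the values of `τ`). -/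
def tiltV (G : SimpleGraph V) [DecidableRel G.Adj] (μ : (V → Bool) → ℝ) (θ' : ℝ)
    (Λ : Finset V) (τ : V → Bool) (σ : V → Bool) : ℝ :=
  μ σ * (1 - θ') ^ (mEdges G σ) * (if ∀ v ∈ Λ, σ v = τ v then 1 else 0)

/-- Weight of `σ` under the edge-event-pinned, edge-tilted measure `(1−t)⊗μ^S`
(conditioning on all edge events in `S` occurring). -/
def tiltE (G : SimpleGraph V) [DecidableRel G.Adj] (μ : (V → Bool) → ℝ) (t : ℝ)
    (S : Finset (Sym2 V)) (σ : V → Bool) : ℝ :=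
  μ σ * (1 - t) ^ (mEdges G σ) * (if ∀ e ∈ S, bothOnes σ e then 1 else 0)

/-- Probability of the event `E` under the (unnormalized) weight `w`. -/
def prW (w : (V → Bool) → ℝ) (E : (V → Bool) → Prop) : ℝ :=
  (∑ σ, w σ * (if E σ then 1 else 0)) / (∑ σ, w σ)

/-- Second-order correlation matrix `Cor^{(2)}` of the measure with weight `w`, indexed by
edges of `G`: `Cor^{(2)}(uv, wz) = ν(wz | uv) − ν(wz)` when `ν(uv) > 0`, else `0`. -/
def corMat (G : SimpleGraph V) [DecidableRel G.Adj] (w : (V → Bool) → ℝ) :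
    Matrix {e : Sym2 V // e ∈ G.edgeFinset} {e : Sym2 V // e ∈ G.edgeFinset} ℝ :=
  fun e f =>
    if 0 < prW w (fun σ => bothOnes σ e.1) then
      prW (fun σ => w σ * (if bothOnes σ e.1 then 1 else 0)) (fun σ => bothOnes σ f.1)
        - prW w (fun σ => bothOnes σ f.1)
    else 0

/-!
Conditioning on the edge events of `S` is the same as pinning every endpoint of `S` to `1`, so the
hypothesis applies to `(1−t)⊗μ^S` itself. Its correlation matrix is `D⁻¹ Q`, where `Q` is the
covariance matrix of the edge indicators and `D` the diagonal of their means. Since `Q` vanishes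
off the support of `D`, the nonzero spectrum of `D⁻¹ Q = D^{-1/2} (D^{-1/2} Q)` equals that of the
symmetric matrix `D^{-1/2} Q D^{-1/2}`, and the bound `λ_max ≤ C` of the latter is exactly
`Q ⪯ C D`.
-/

section SpectralBound

open Matrix

variable {n : Type*} [Fintype n] [DecidableEq n]

theorem le_of_mem_spectrum_mul_comm {A : Type*} [Ring A] [Algebra ℝ A] {a b : A} {C : ℝ}
    (hC : 0 ≤ C) (h : ∀ r ∈ spectrum ℝ (b * a), r ≤ C) {r : ℝ} (hr : r ∈ spectrum ℝ (a * b)) :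
    r ≤ C := by
  rcases eq_or_ne r 0 with rfl | hr0
  · exact hC
  · have : r ∈ spectrum ℝ (a * b) \ {0} := ⟨hr, hr0⟩
    rw [spectrum.nonzero_mul_comm] at this
    exact h r this.1

open scoped MatrixOrder in
theorem Matrix.IsHermitian.dotProduct_mulVec_le_of_spectrum_le {A : Matrix n n ℝ}
    (hA : A.IsHermitian) {C : ℝ} (hC : ∀ r ∈ spectrum ℝ A, r ≤ C) (y : n → ℝ) :
    y ⬝ᵥ A *ᵥ y ≤ C * (y ⬝ᵥ y) := by
  have hpsd : (algebraMap ℝ (Matrix n n ℝ) C - A).PosSemidef :=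
    Matrix.le_iff.mp (le_algebraMap_of_spectrum_le hC hA)
  simpa only [star_trivial, Algebra.algebraMap_eq_smul_one, sub_mulVec, smul_mulVec, one_mulVec,
    dotProduct_sub, dotProduct_smul, smul_eq_mul, sub_nonneg] using hpsd.dotProduct_mulVec_nonneg y

theorem dotProduct_mulVec_le_of_spectrum_diagonal_inv_mul_le {p : n → ℝ} (hp : 0 ≤ p)
    {Q : Matrix n n ℝ} (hQ : Q.IsSymm) (hQp : ∀ i j, p i = 0 → Q i j = 0) {C : ℝ}
    (hC : 0 ≤ C) (h : ∀ r ∈ spectrum ℝ (diagonal p⁻¹ * Q), r ≤ C) (x : n → ℝ) :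
    x ⬝ᵥ Q *ᵥ x ≤ C * ∑ i, p i * x i ^ 2 := by
  set s : n → ℝ := fun i => √(p i)
  set A := diagonal s⁻¹ * Q * diagonal s⁻¹
  have hA : A.IsHermitian := by
    simp only [A, IsHermitian, conjTranspose_eq_transpose_of_trivial, transpose_mul,
      diagonal_transpose, hQ.eq, mul_assoc]
  have hs_inv_sq : diagonal s⁻¹ * diagonal s⁻¹ = diagonal p⁻¹ := by
    rw [diagonal_mul_diagonal]
    congr 1 with i
    simp [s, ← mul_inv, Real.mul_self_sqrt (hp i)]
  have hspec : ∀ r ∈ spectrum ℝ A, r ≤ C := fun r hr =>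
    le_of_mem_spectrum_mul_comm hC (by rwa [← mul_assoc, hs_inv_sq]) hr
  have hQ_eq : ∀ i j, Q i j = s i * A i j * s j := by
    intro i j
    rcases (hp i).eq_or_lt with hi | hi
    · simp [hQp i j hi.symm, A]
    rcases (hp j).eq_or_lt with hj | hj
    · simp [← hQ.apply i j, hQp j i hj.symm, A]
    have hsi : s i ≠ 0 := (Real.sqrt_pos.mpr hi).ne'
    have hsj : s j ≠ 0 := (Real.sqrt_pos.mpr hj).ne'
    simp only [A, mul_diagonal, diagonal_mul, Pi.inv_apply]
    field_simp
  calc x ⬝ᵥ Q *ᵥ x = (s * x) ⬝ᵥ A *ᵥ (s * x) := by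
        simp only [dotProduct, mulVec, hQ_eq, Pi.mul_apply, Finset.mul_sum]
        refine Finset.sum_congr rfl fun i _ => Finset.sum_congr rfl fun j _ => by ring
    _ ≤ C * ((s * x) ⬝ᵥ (s * x)) := hA.dotProduct_mulVec_le_of_spectrum_le hspec _
    _ = C * ∑ i, p i * x i ^ 2 := by
        simp only [dotProduct, Pi.mul_apply]
        congr 1
        refine Finset.sum_congr rfl fun i _ => ?_
        rw [← Real.mul_self_sqrt (hp i)]
        ring

end SpectralBound

section Weights

variable {w : (V → Bool) → ℝ}

theorem prW_nonneg (hw : 0 ≤ w) (E : (V → Bool) → Prop) : 0 ≤ prW w E :=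
  div_nonneg (Finset.sum_nonneg fun σ _ => mul_nonneg (hw σ) (by split_ifs <;> norm_num))
    (Finset.sum_nonneg fun σ _ => hw σ)

theorem prW_mono (hw : 0 ≤ w) {E F : (V → Bool) → Prop} (h : ∀ σ, E σ → F σ) :
    prW w E ≤ prW w F := by
  refine div_le_div_of_nonneg_right (Finset.sum_le_sum fun σ _ => ?_)
    (Finset.sum_nonneg fun σ _ => hw σ)
  by_cases hE : E σ
  · simp [hE, h σ hE]
  · rw [if_neg hE, mul_zero]
    exact mul_nonneg (hw σ) (by split_ifs <;> norm_num)

theorem prW_mul_indicator (hZ : ∑ σ, w σ ≠ 0) (E F : (V → Bool) → Prop) :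
    prW (fun σ => w σ * if E σ then 1 else 0) F = prW w (fun σ => E σ ∧ F σ) / prW w E := by
  unfold prW
  rw [div_div_div_cancel_right₀ hZ]
  congr 1
  refine Finset.sum_congr rfl fun σ _ => ?_
  by_cases hE : E σ <;> simp [hE]

end Weights

section EdgeEvents

variable (G : SimpleGraph V) [DecidableRel G.Adj] (w : (V → Bool) → ℝ)

def edgeMarginal : G.edgeFinset → ℝ := fun e => prW w (bothOnes · e.1)

def edgeCovariance : Matrix G.edgeFinset G.edgeFinset ℝ :=
  Matrix.of fun e f => prW w (fun σ => bothOnes σ e.1 ∧ bothOnes σ f.1)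
    - edgeMarginal G w e * edgeMarginal G w f

variable {G w}

theorem edgeCovariance_isSymm : (edgeCovariance G w).IsSymm := by
  ext e f
  simp only [edgeCovariance, Matrix.transpose_apply, Matrix.of_apply, and_comm, mul_comm]

theorem edgeCovariance_eq_zero_of_edgeMarginal_eq_zero (hw : 0 ≤ w) (e f : G.edgeFinset)
    (he : edgeMarginal G w e = 0) : edgeCovariance G w e f = 0 := by
  have hjoint : prW w (fun σ => bothOnes σ e.1 ∧ bothOnes σ f.1) = 0 :=
    le_antisymm (he ▸ prW_mono hw fun σ h => h.1) (prW_nonneg hw _)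
  simp [edgeCovariance, hjoint, he]

theorem corMat_eq_diagonal_inv_mul (hw : 0 ≤ w) (hZ : ∑ σ, w σ ≠ 0) :
    corMat G w = Matrix.diagonal (edgeMarginal G w)⁻¹ * edgeCovariance G w := by
  ext e f
  have hp : 0 ≤ prW w (bothOnes · e.1) := prW_nonneg hw _
  simp only [corMat, Matrix.diagonal_mul, prW_mul_indicator hZ, edgeCovariance, edgeMarginal,
    Matrix.of_apply, Pi.inv_apply]
  rcases hp.eq_or_lt with he | he
  · simp [← he]
  · rw [if_pos he]
    field_simp

end EdgeEvents

theorem tiltE_nonneg (G : SimpleGraph V) [DecidableRel G.Adj] {μ : (V → Bool) → ℝ} (hμ : 0 ≤ μ)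
    {t : ℝ} (ht : t ≤ 1) (S : Finset (Sym2 V)) : 0 ≤ tiltE G μ t S := fun σ =>
  mul_nonneg (mul_nonneg (hμ σ) (pow_nonneg (by linarith) _)) (by split_ifs <;> norm_num)

theorem tiltV_pin_true_eq_tiltE (G : SimpleGraph V) [DecidableRel G.Adj] (μ : (V → Bool) → ℝ)
    (t : ℝ) (S : Finset (Sym2 V)) :
    tiltV G μ t {v | ∃ e ∈ S, v ∈ e} (fun _ => true) = tiltE G μ t S := by
  ext σ
  simp only [tiltV, tiltE, bothOnes, Finset.mem_filter, Finset.mem_univ, true_and]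
  congr 2
  exact propext ⟨fun h e he v hv => h v ⟨e, he, hv⟩, fun h v ⟨e, he, hv⟩ => h e he v hv⟩

theorem edge_field_spectral_stability_general (G : SimpleGraph V) [DecidableRel G.Adj]
    (μ : (V → Bool) → ℝ) (hμ0 : ∀ σ, 0 ≤ μ σ)
    (θ : ℝ) (hθ : θ ∈ Set.Ioo (0:ℝ) 1) (C : ℝ) (hC : 0 < C)
    (hcor : ∀ θ' ∈ Set.Icc (0:ℝ) θ, ∀ (Λ : Finset V) (τ : V → Bool),
      0 < (∑ σ, tiltV G μ θ' Λ τ σ) →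
      ∀ r ∈ spectrum ℝ (corMat G (tiltV G μ θ' Λ τ)), r ≤ C) :
    ∀ t ∈ Set.Icc (0:ℝ) θ, ∀ S : Finset (Sym2 V), S ⊆ G.edgeFinset →
      0 < (∑ σ, tiltE G μ t S σ) →
      ∀ x : {e : Sym2 V // e ∈ G.edgeFinset} → ℝ,
        (∑ e, ∑ f, x e *
            (prW (tiltE G μ t S) (fun σ => bothOnes σ e.1 ∧ bothOnes σ f.1)
              - prW (tiltE G μ t S) (fun σ => bothOnes σ e.1)
                * prW (tiltE G μ t S) (fun σ => bothOnes σ f.1)) * x f)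
          ≤ C * ∑ e, prW (tiltE G μ t S) (fun σ => bothOnes σ e.1) * x e ^ 2 := by
  intro t ht S _ hZ x
  have hw := tiltE_nonneg G hμ0 (ht.2.trans hθ.2.le) S
  have hspec := hcor t ht _ (fun _ => true) (by rwa [tiltV_pin_true_eq_tiltE])
  rw [tiltV_pin_true_eq_tiltE, corMat_eq_diagonal_inv_mul hw hZ.ne'] at hspec
  have := dotProduct_mulVec_le_of_spectrum_diagonal_inv_mul_le (fun e => prW_nonneg hw _)
    edgeCovariance_isSymm (edgeCovariance_eq_zero_of_edgeMarginal_eq_zero hw) hC.le hspec x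
  simpa [dotProduct, Matrix.mulVec, Finset.mul_sum, mul_assoc, edgeCovariance, edgeMarginal]
    using this

/-- **Spectral stability of the edge-field denoising process via second-order correlations.**
If for all vertex pinnings `(Λ, τ)` and all tilts `θ' ∈ [0,θ]` the eigenvalues of the
second-order correlation matrix of `(1−θ')⊗μ^τ` are at most `C`, then the edge-field
denoising process for `μ` is spectrally (χ²-entropically) stable with rate `C` up to
time `θ`: for every `t ∈ [0,θ]` and every feasible edge pinning `S`, the covariance
matrix of the edge-event indicators under `(1−t)⊗μ^S` is dominated by `C` times the
diagonal matrix of their means. -/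
theorem edge_field_spectral_stability (G : SimpleGraph V) [DecidableRel G.Adj]
    (μ : (V → Bool) → ℝ) (hμ0 : ∀ σ, 0 ≤ μ σ) (hμ1 : ∑ σ, μ σ = 1)
    (θ : ℝ) (hθ : θ ∈ Set.Ioo (0:ℝ) 1) (C : ℝ) (hC : 0 < C)
    (hcor : ∀ θ' ∈ Set.Icc (0:ℝ) θ, ∀ (Λ : Finset V) (τ : V → Bool),
      0 < (∑ σ, tiltV G μ θ' Λ τ σ) →
      ∀ r ∈ spectrum ℝ (corMat G (tiltV G μ θ' Λ τ)), r ≤ C) :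
    ∀ t ∈ Set.Icc (0:ℝ) θ, ∀ S : Finset (Sym2 V), S ⊆ G.edgeFinset →
      0 < (∑ σ, tiltE G μ t S σ) →
      ∀ x : {e : Sym2 V // e ∈ G.edgeFinset} → ℝ,
        (∑ e, ∑ f, x e *
            (prW (tiltE G μ t S) (fun σ => bothOnes σ e.1 ∧ bothOnes σ f.1)
              - prW (tiltE G μ t S) (fun σ => bothOnes σ e.1)
                * prW (tiltE G μ t S) (fun σ => bothOnes σ f.1)) * x f)
          ≤ C * ∑ e, prW (tiltE G μ t S) (fun σ => bothOnes σ e.1) * x e ^ 2 :=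
  edge_field_spectral_stability_general G μ hμ0 θ hθ C hC hcor

end
end
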